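/- arXiv:2202.09894 — 12 statements merged into one kernel-verified Lean document; each statement's English description precedes it below -/
import Mathlib

section
/- For all real numbers u_xx, u_xy, u_yy, u_xxx, u_xxy, u_xyy, u_yyy one has the polynomial identity u_yy³·F = (u_yy³·u_xxx + 3·u_xx·u_xy·u_yy·u_yyy − 3·u_xx·u_xyy·u_yy² − 3·u_xxy·u_xy·u_yy² − 4·u_xy³·u_yyy + 6·u_xy²·u_xyy·u_yy)² + (u_xx·u_yy − u_xy²)·(u_xx·u_yy·u_yyy − 3·u_xxy·u_yy² − 4·u_xy²·u_yyy + 6·u_xy·u_xyy·u_yy)². In particular, when u_xx·u_yy − u_xy² > 0 and u_yy ≠ 0, F is (1/u_yy³ times) a sum of two squares, and when u_xx·u_yy − u_xy² < 0 it is a difference of two squares. -/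
/-- The polynomial `F` defining the unique third-order `Aff(3)`-invariant PDE
(the Fubini–Pick invariant, up to a nonzero factor). -/
def Fpoly (uxx uxy uyy uxxx uxxy uxyy uyyy : ℝ) : ℝ :=
  6*uxx*uxxx*uxy*uyy*uyyy - 6*uxx*uxxx*uxyy*uyy^2 - 18*uxx*uxxy*uxy*uxyy*uyy
  + 12*uxx*uxxy*uxy^2*uyyy - 6*uxx^2*uxxy*uyy*uyyy + 9*uxx*uxxy^2*uyy^2
  - 6*uxx^2*uxy*uxyy*uyyy + 9*uxx^2*uxyy^2*uyy + uxx^3*uyyy^2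
  - 6*uxxx*uxxy*uxy*uyy^2 + 12*uxxx*uxy^2*uxyy*uyy - 8*uxxx*uxy^3*uyyy
  + uxxx^2*uyy^3

theorem stmt0 (uxx uxy uyy uxxx uxxy uxyy uyyy : ℝ) :
    uyy^3 * Fpoly uxx uxy uyy uxxx uxxy uxyy uyyy =
      (uyy^3*uxxx + 3*uxx*uxy*uyy*uyyy - 3*uxx*uxyy*uyy^2 - 3*uxxy*uxy*uyy^2
        - 4*uxy^3*uyyy + 6*uxy^2*uxyy*uyy)^2
      + (uxx*uyy - uxy^2) *
        (uxx*uyy*uyyy - 3*uxxy*uyy^2 - 4*uxy^2*uyyy + 6*uxy*uxyy*uyy)^2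
    ∧ (uxx*uyy - uxy^2 > 0 → uyy ≠ 0 →
        ∃ a b : ℝ, Fpoly uxx uxy uyy uxxx uxxy uxyy uyyy = (1/uyy^3) * (a^2 + b^2))
    ∧ (uxx*uyy - uxy^2 < 0 →
        ∃ a b : ℝ, uyy^3 * Fpoly uxx uxy uyy uxxx uxxy uxyy uyyy = a^2 - b^2) := by
  set A := uyy^3*uxxx + 3*uxx*uxy*uyy*uyyy - 3*uxx*uxyy*uyy^2 - 3*uxxy*uxy*uyy^2
        - 4*uxy^3*uyyy + 6*uxy^2*uxyy*uyy with hA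
  set B := uxx*uyy*uyyy - 3*uxxy*uyy^2 - 4*uxy^2*uyyy + 6*uxy*uxyy*uyy with hB
  have key : uyy^3 * Fpoly uxx uxy uyy uxxx uxxy uxyy uyyy
      = A^2 + (uxx*uyy - uxy^2) * B^2 := by
    simp only [Fpoly, hA, hB]; ring
  refine ⟨key, ?_, ?_⟩
  · intro hd hy
    refine ⟨A, Real.sqrt (uxx*uyy - uxy^2) * B, ?_⟩
    have hy3 : uyy^3 ≠ 0 := pow_ne_zero 3 hy
    have hs : (Real.sqrt (uxx*uyy - uxy^2) * B)^2 = (uxx*uyy - uxy^2) * B^2 := by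
      rw [mul_pow, Real.sq_sqrt hd.le]
    field_simp
    rw [Real.sq_sqrt (by linarith)]; linear_combination key
  · intro hd
    refine ⟨A, Real.sqrt (uxy^2 - uxx*uyy) * B, ?_⟩
    have hs : (Real.sqrt (uxy^2 - uxx*uyy) * B)^2 = (uxy^2 - uxx*uyy) * B^2 := by
      rw [mul_pow, Real.sq_sqrt (by linarith)]
    rw [key, hs]; ring
end

section
/- Let u_xx, u_xy, u_yy, u_xxx, u_xxy, u_xyy, u_yyy be real numbers satisfying u_xx·u_yy − u_xy² = 0, u_xxx·u_yy + u_xx·u_xyy − 2·u_xy·u_xxy = 0, and u_xxy·u_yy + u_xx·u_yyy − 2·u_xy·u_xyy = 0 (the Monge–Ampère equation together with its two first total-derivative consequences). Then F = 0. In other words, every solution of the second-order Monge–Ampère equation u_xx·u_yy − u_xy² = 0 is also a solution of the third-order equation F = 0. -/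
theorem stmt2 (uxx uxy uyy uxxx uxxy uxyy uyyy : ℝ)
    (hMA : uxx*uyy - uxy^2 = 0)
    (hMAx : uxxx*uyy + uxx*uxyy - 2*uxy*uxxy = 0)
    (hMAy : uxxy*uyy + uxx*uyyy - 2*uxy*uxyy = 0) :
    Fpoly uxx uxy uyy uxxx uxxy uxyy uyyy = 0 := by
  unfold Fpoly
  linear_combination
    (4*uxx*uxyy^2 - 8*uxxy*uxx*uyyy + 8*uxxy^2*uyy - 12*uxxx*uyy*uxyy
      + 8*uxxx*uxy*uyyy) * hMA
    + (5*uxx*uyy*uxyy - 2*uxy*uxx*uyyy - 4*uxxy*uxy*uyy + uxxx*uyy^2) * hMAx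
    + (uxx^2*uyyy - 2*uxy*uxx*uxyy + uxxy*uxx*uyy) * hMAy
end

section
/- Let G := (u_xx·u_yy − u_xy²)·F, a polynomial function on ℝ¹² with coordinates (x, y, u, u_x, u_y, u_xx, u_xy, u_yy, u_xxx, u_xxy, u_xyy, u_yyy). Then for each of the twelve vector fields X ∈ {∂_x, ∂_y, ∂_u, x∂_x, x∂_y, x∂_u, y∂_x, y∂_y, y∂_u, u∂_x, u∂_y, u∂_u} generating the affine Lie algebra aff(3) of ℝ³, there exists a polynomial λ_X on ℝ¹² such that X⁽³⁾(G) = λ_X · G, where X⁽³⁾ denotes the third prolongation of X. In particular each X⁽³⁾ is tangent to the zero set of G, i.e. the PDE (u_xx·u_yy − u_xy²)·F = 0 is Aff(3)-invariant. -/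
noncomputable section

/-- The third-order jet space `J³` of surfaces in `ℝ³`, with coordinates
`(x, y, u, u_x, u_y, u_xx, u_xy, u_yy, u_xxx, u_xxy, u_xyy, u_yyy)`
indexed by `0, 1, ..., 11`. -/
abbrev Jet : Type := Fin 12 → ℝ

/-- Partial derivative of a function on `ℝ¹²` with respect to the `i`-th coordinate. -/
noncomputable def pd (i : Fin 12) (G : Jet → ℝ) : Jet → ℝ :=
  fun p => deriv (fun t => G (Function.update p i t)) (p i)

/-- Truncated total derivative `D_x` (up to third order). -/
noncomputable def Dx (G : Jet → ℝ) : Jet → ℝ := fun p =>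
  pd 0 G p + p 3 * pd 2 G p + p 5 * pd 3 G p + p 6 * pd 4 G p
    + p 8 * pd 5 G p + p 9 * pd 6 G p + p 10 * pd 7 G p

/-- Truncated total derivative `D_y` (up to third order). -/
noncomputable def Dy (G : Jet → ℝ) : Jet → ℝ := fun p =>
  pd 1 G p + p 4 * pd 2 G p + p 6 * pd 3 G p + p 7 * pd 4 G p
    + p 9 * pd 5 G p + p 10 * pd 6 G p + p 11 * pd 7 G p

/-- The third prolongation `X⁽³⁾` of the vector field `X = X¹∂_x + X²∂_y + X₀∂_u`,
applied to a function `G` on `J³`. -/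
noncomputable def prol3 (X1 X2 X0 : Jet → ℝ) (G : Jet → ℝ) : Jet → ℝ :=
  let XA : Jet → ℝ := fun p => Dx X0 p - p 3 * Dx X1 p - p 4 * Dx X2 p
  let XB : Jet → ℝ := fun p => Dy X0 p - p 3 * Dy X1 p - p 4 * Dy X2 p
  let X11 : Jet → ℝ := fun p => Dx XA p - p 5 * Dx X1 p - p 6 * Dx X2 p
  let X12 : Jet → ℝ := fun p => Dy XA p - p 5 * Dy X1 p - p 6 * Dy X2 p
  let X22 : Jet → ℝ := fun p => Dy XB p - p 6 * Dy X1 p - p 7 * Dy X2 p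
  let X111 : Jet → ℝ := fun p => Dx X11 p - p 8 * Dx X1 p - p 9 * Dx X2 p
  let X112 : Jet → ℝ := fun p => Dy X11 p - p 8 * Dy X1 p - p 9 * Dy X2 p
  let X122 : Jet → ℝ := fun p => Dy X12 p - p 9 * Dy X1 p - p 10 * Dy X2 p
  let X222 : Jet → ℝ := fun p => Dy X22 p - p 10 * Dy X1 p - p 11 * Dy X2 p
  fun p =>
    X1 p * pd 0 G p + X2 p * pd 1 G p + X0 p * pd 2 G p
    + XA p * pd 3 G p + XB p * pd 4 G p
    + X11 p * pd 5 G p + X12 p * pd 6 G p + X22 p * pd 7 G p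
    + X111 p * pd 8 G p + X112 p * pd 9 G p + X122 p * pd 10 G p + X222 p * pd 11 G p

/-- `G = (u_xx·u_yy − u_xy²)·F` as a function on `J³`. -/
def Gfun : Jet → ℝ := fun p =>
  (p 5 * p 7 - (p 6)^2) * Fpoly (p 5) (p 6) (p 7) (p 8) (p 9) (p 10) (p 11)

/-- The twelve generators `∂_x, ∂_y, ∂_u, x∂_x, x∂_y, x∂_u, y∂_x, y∂_y, y∂_u,
u∂_x, u∂_y, u∂_u` of the affine Lie algebra `aff(3)`, each given by the triple
of its coefficients `(X¹, X², X₀)`. -/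
def affGenerators : List ((Jet → ℝ) × (Jet → ℝ) × (Jet → ℝ)) :=
  [ (fun _ => 1, fun _ => 0, fun _ => 0),
    (fun _ => 0, fun _ => 1, fun _ => 0),
    (fun _ => 0, fun _ => 0, fun _ => 1),
    (fun p => p 0, fun _ => 0, fun _ => 0),
    (fun _ => 0, fun p => p 0, fun _ => 0),
    (fun _ => 0, fun _ => 0, fun p => p 0),
    (fun p => p 1, fun _ => 0, fun _ => 0),
    (fun _ => 0, fun p => p 1, fun _ => 0),
    (fun _ => 0, fun _ => 0, fun p => p 1),
    (fun p => p 2, fun _ => 0, fun _ => 0),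
    (fun _ => 0, fun p => p 2, fun _ => 0),
    (fun _ => 0, fun _ => 0, fun p => p 2) ]


open MvPolynomial

lemma hasDerivAt_eval_update (P : MvPolynomial (Fin 12) ℝ) (p : Jet) (i : Fin 12) :
    HasDerivAt (fun t => eval (Function.update p i t) P) (eval p (pderiv i P)) (p i) := by
  induction P using MvPolynomial.induction_on with
  | C a => simp only [eval_C, pderiv_C, map_zero]; exact hasDerivAt_const _ _
  | add f g hf hg => simp only [map_add]; exact hf.add hg
  | mul_X f j hf =>
    by_cases h : j = i
    · subst h
      have h2 := hf.mul (hasDerivAt_id (p j))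
      simp only [map_mul, eval_X, pderiv_mul, pderiv_X_self, map_add, mul_one, map_one]
      refine HasDerivAt.congr_of_eventuallyEq (h2.congr_deriv ?_) (Filter.Eventually.of_forall fun t => ?_) <;> simp [Function.update_self]
    · have h2 := hf.mul_const (p j)
      simp only [map_mul, eval_X, pderiv_mul, pderiv_X_of_ne h, map_add, mul_zero, add_zero]
      refine HasDerivAt.congr_of_eventuallyEq (h2.congr_deriv ?_) (Filter.Eventually.of_forall fun t => ?_) <;> simp [Function.update_of_ne h]

lemma pd_eval (i : Fin 12) (P : MvPolynomial (Fin 12) ℝ) :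
    pd i (fun q => eval q P) = fun p => eval p (pderiv i P) := by
  funext p
  exact (hasDerivAt_eval_update P p i).deriv

noncomputable def pDx (P : MvPolynomial (Fin 12) ℝ) : MvPolynomial (Fin 12) ℝ :=
  pderiv 0 P + X 3 * pderiv 2 P + X 5 * pderiv 3 P + X 6 * pderiv 4 P
    + X 8 * pderiv 5 P + X 9 * pderiv 6 P + X 10 * pderiv 7 P

noncomputable def pDy (P : MvPolynomial (Fin 12) ℝ) : MvPolynomial (Fin 12) ℝ :=
  pderiv 1 P + X 4 * pderiv 2 P + X 6 * pderiv 3 P + X 7 * pderiv 4 P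
    + X 9 * pderiv 5 P + X 10 * pderiv 6 P + X 11 * pderiv 7 P

lemma Dx_eval (P : MvPolynomial (Fin 12) ℝ) :
    Dx (fun q => eval q P) = fun p => eval p (pDx P) := by
  funext p; simp [Dx, pd_eval, pDx]

lemma Dy_eval (P : MvPolynomial (Fin 12) ℝ) :
    Dy (fun q => eval q P) = fun p => eval p (pDy P) := by
  funext p; simp [Dy, pd_eval, pDy]

lemma fold2 (i j : Fin 12) (A B C : MvPolynomial (Fin 12) ℝ) :
    (fun p : Jet => eval p A - p i * eval p B - p j * eval p C)
      = fun p => eval p (A - X i * B - X j * C) := by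
  funext p; simp

noncomputable def pprol3 (P1 P2 P0 Q : MvPolynomial (Fin 12) ℝ) : MvPolynomial (Fin 12) ℝ :=
  let A := pDx P0 - X 3 * pDx P1 - X 4 * pDx P2
  let B := pDy P0 - X 3 * pDy P1 - X 4 * pDy P2
  let A11 := pDx A - X 5 * pDx P1 - X 6 * pDx P2
  let A12 := pDy A - X 5 * pDy P1 - X 6 * pDy P2
  let A22 := pDy B - X 6 * pDy P1 - X 7 * pDy P2
  let A111 := pDx A11 - X 8 * pDx P1 - X 9 * pDx P2
  let A112 := pDy A11 - X 8 * pDy P1 - X 9 * pDy P2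
  let A122 := pDy A12 - X 9 * pDy P1 - X 10 * pDy P2
  let A222 := pDy A22 - X 10 * pDy P1 - X 11 * pDy P2
  P1 * pderiv 0 Q + P2 * pderiv 1 Q + P0 * pderiv 2 Q
    + A * pderiv 3 Q + B * pderiv 4 Q
    + A11 * pderiv 5 Q + A12 * pderiv 6 Q + A22 * pderiv 7 Q
    + A111 * pderiv 8 Q + A112 * pderiv 9 Q + A122 * pderiv 10 Q + A222 * pderiv 11 Q

set_option maxHeartbeats 1000000 in
lemma prol3_eval (P1 P2 P0 Q : MvPolynomial (Fin 12) ℝ) (p : Jet) :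
    prol3 (fun q => eval q P1) (fun q => eval q P2) (fun q => eval q P0) (fun q => eval q Q) p
      = eval p (pprol3 P1 P2 P0 Q) := by
  simp only [prol3, pprol3, Dx_eval, Dy_eval, fold2, pd_eval, map_add, map_sub, map_mul, eval_X]

noncomputable def GP : MvPolynomial (Fin 12) ℝ :=
  (X 5 * X 7 - X 6 ^ 2) *
  (C 6 * X 5 * X 8 * X 6 * X 7 * X 11 - C 6 * X 5 * X 8 * X 10 * X 7 ^ 2
   - C 18 * X 5 * X 9 * X 6 * X 10 * X 7 + C 12 * X 5 * X 9 * X 6 ^ 2 * X 11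
   - C 6 * X 5 ^ 2 * X 9 * X 7 * X 11 + C 9 * X 5 * X 9 ^ 2 * X 7 ^ 2
   - C 6 * X 5 ^ 2 * X 6 * X 10 * X 11 + C 9 * X 5 ^ 2 * X 10 ^ 2 * X 7 + X 5 ^ 3 * X 11 ^ 2
   - C 6 * X 8 * X 9 * X 6 * X 7 ^ 2 + C 12 * X 8 * X 6 ^ 2 * X 10 * X 7
   - C 8 * X 8 * X 6 ^ 3 * X 11 + X 8 ^ 2 * X 7 ^ 3)

lemma Gfun_eq : Gfun = fun q => eval q GP := by
  funext q
  simp only [Gfun, Fpoly, GP, map_add, map_sub, map_mul, map_pow, eval_X, eval_C]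

lemma zero_eq : (fun _ : Jet => (0:ℝ)) = (fun q => eval q (0 : MvPolynomial (Fin 12) ℝ)) := by
  funext q; simp

lemma one_eq : (fun _ : Jet => (1:ℝ)) = (fun q => eval q (1 : MvPolynomial (Fin 12) ℝ)) := by
  funext q; simp

lemma coord_eq (k : Fin 12) :
    (fun q : Jet => q k) = (fun q => eval q (X k : MvPolynomial (Fin 12) ℝ)) := by
  funext q; simp

lemma evalpdGP0 (p : Jet) : MvPolynomial.eval p (MvPolynomial.pderiv 0 GP) = 0 := by
  simp [GP, pderiv_mul, pderiv_pow, pderiv_C, pderiv_one]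

lemma evalpdGP1 (p : Jet) : MvPolynomial.eval p (MvPolynomial.pderiv 1 GP) = 0 := by
  simp [GP, pderiv_mul, pderiv_pow, pderiv_C, pderiv_one]

lemma evalpdGP2 (p : Jet) : MvPolynomial.eval p (MvPolynomial.pderiv 2 GP) = 0 := by
  simp [GP, pderiv_mul, pderiv_pow, pderiv_C, pderiv_one]

lemma evalpdGP3 (p : Jet) : MvPolynomial.eval p (MvPolynomial.pderiv 3 GP) = 0 := by
  simp [GP, pderiv_mul, pderiv_pow, pderiv_C, pderiv_one]

lemma evalpdGP4 (p : Jet) : MvPolynomial.eval p (MvPolynomial.pderiv 4 GP) = 0 := by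
  simp [GP, pderiv_mul, pderiv_pow, pderiv_C, pderiv_one]

lemma evalpdGP5 (p : Jet) : MvPolynomial.eval p (MvPolynomial.pderiv 5 GP) = p 7 ^ 4 * p 8 ^ 2 + ((-6:ℝ)) * p 6 * p 7 ^ 3 * p 8 * p 9 + ((-9:ℝ)) * p 6 ^ 2 * p 7 ^ 2 * p 9 ^ 2 + (18:ℝ) * p 6 ^ 2 * p 7 ^ 2 * p 8 * p 10 + (18:ℝ) * p 6 ^ 3 * p 7 * p 9 * p 10 + ((-14:ℝ)) * p 6 ^ 3 * p 7 * p 8 * p 11 + ((-12:ℝ)) * p 6 ^ 4 * p 9 * p 11 + (18:ℝ) * p 5 * p 7 ^ 3 * p 9 ^ 2 + ((-12:ℝ)) * p 5 * p 7 ^ 3 * p 8 * p 10 + ((-36:ℝ)) * p 5 * p 6 * p 7 ^ 2 * p 9 * p 10 + (12:ℝ) * p 5 * p 6 * p 7 ^ 2 * p 8 * p 11 + ((-18:ℝ)) * p 5 * p 6 ^ 2 * p 7 * p 10 ^ 2 + (36:ℝ) * p 5 * p 6 ^ 2 * p 7 * p 9 * p 11 + (12:ℝ) * p 5 * p 6 ^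 3 * p 10 * p 11 + (27:ℝ) * p 5 ^ 2 * p 7 ^ 2 * p 10 ^ 2 + ((-18:ℝ)) * p 5 ^ 2 * p 7 ^ 2 * p 9 * p 11 + ((-18:ℝ)) * p 5 ^ 2 * p 6 * p 7 * p 10 * p 11 + ((-3:ℝ)) * p 5 ^ 2 * p 6 ^ 2 * p 11 ^ 2 + (4:ℝ) * p 5 ^ 3 * p 7 * p 11 ^ 2 := by
  simp [GP, pderiv_mul, pderiv_pow, pderiv_C, pderiv_one]
  ring

lemma evalpdGP6 (p : Jet) : MvPolynomial.eval p (MvPolynomial.pderiv 6 GP) = ((-2:ℝ)) * p 6 * p 7 ^ 3 * p 8 ^ 2 + (18:ℝ) * p 6 ^ 2 * p 7 ^ 2 * p 8 * p 9 + ((-48:ℝ)) * p 6 ^ 3 * p 7 * p 8 * p 10 + (40:ℝ) * p 6 ^ 4 * p 8 * p 11 + ((-6:ℝ)) * p 5 * p 7 ^ 3 * p 8 * p 9 + ((-18:ℝ)) * p 5 * p 6 * p 7 ^ 2 * p 9 ^ 2 + (36:ℝ) * p 5 * p 6 * p 7 ^ 2 * p 8 * p 10 + (54:ℝ) * p 5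 * p 6 ^ 2 * p 7 * p 9 * p 10 + ((-42:ℝ)) * p 5 * p 6 ^ 2 * p 7 * p 8 * p 11 + ((-48:ℝ)) * p 5 * p 6 ^ 3 * p 9 * p 11 + ((-18:ℝ)) * p 5 ^ 2 * p 7 ^ 2 * p 9 * p 10 + (6:ℝ) * p 5 ^ 2 * p 7 ^ 2 * p 8 * p 11 + ((-18:ℝ)) * p 5 ^ 2 * p 6 * p 7 * p 10 ^ 2 + (36:ℝ) * p 5 ^ 2 * p 6 * p 7 * p 9 * p 11 + (18:ℝ) * p 5 ^ 2 * p 6 ^ 2 * p 10 * p 11 + ((-6:ℝ)) * p 5 ^ 3 * p 7 * p 10 * p 11 + ((-2:ℝ)) * p 5 ^ 3 * p 6 * p 11 ^ 2 := by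
  simp [GP, pderiv_mul, pderiv_pow, pderiv_C, pderiv_one]
  ring

lemma evalpdGP7 (p : Jet) : MvPolynomial.eval p (MvPolynomial.pderiv 7 GP) = ((-3:ℝ)) * p 6 ^ 2 * p 7 ^ 2 * p 8 ^ 2 + (12:ℝ) * p 6 ^ 3 * p 7 * p 8 * p 9 + ((-12:ℝ)) * p 6 ^ 4 * p 8 * p 10 + (4:ℝ) * p 5 * p 7 ^ 3 * p 8 ^ 2 + ((-18:ℝ)) * p 5 * p 6 * p 7 ^ 2 * p 8 * p 9 + ((-18:ℝ)) * p 5 * p 6 ^ 2 * p 7 * p 9 ^ 2 + (36:ℝ) * p 5 * p 6 ^ 2 * p 7 * p 8 * p 10 + (18:ℝ) * p 5 * p 6 ^ 3 * p 9 * p 10 + ((-14:ℝ)) * p 5 * p 6 ^ 3 * p 8 * p 11 + (27:ℝ) * p 5 ^ 2 * p 7 ^ 2 * p 9 ^ 2 + ((-18:ℝ)) * p 5 ^ 2 * p 7 ^ 2 * p 8 * p 10 + ((-36:ℝ)) * p 5 ^ 2 * p 6 * p 7 * p 9 * p 10 + (12:ℝ) * p 5 ^ 2 * p 6 * p 7 *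 p 8 * p 11 + ((-9:ℝ)) * p 5 ^ 2 * p 6 ^ 2 * p 10 ^ 2 + (18:ℝ) * p 5 ^ 2 * p 6 ^ 2 * p 9 * p 11 + (18:ℝ) * p 5 ^ 3 * p 7 * p 10 ^ 2 + ((-12:ℝ)) * p 5 ^ 3 * p 7 * p 9 * p 11 + ((-6:ℝ)) * p 5 ^ 3 * p 6 * p 10 * p 11 + p 5 ^ 4 * p 11 ^ 2 := by
  simp [GP, pderiv_mul, pderiv_pow, pderiv_C, pderiv_one]
  ring

lemma evalpdGP8 (p : Jet) : MvPolynomial.eval p (MvPolynomial.pderiv 8 GP) = ((-2:ℝ)) * p 6 ^ 2 * p 7 ^ 3 * p 8 + (6:ℝ) * p 6 ^ 3 * p 7 ^ 2 * p 9 + ((-12:ℝ)) * p 6 ^ 4 * p 7 * p 10 + (8:ℝ) * p 6 ^ 5 * p 11 + (2:ℝ) * p 5 * p 7 ^ 4 * p 8 + ((-6:ℝ)) * p 5 * p 6 * p 7 ^ 3 * p 9 + (18:ℝ) * p 5 * p 6 ^ 2 * p 7 ^ 2 * p 10 + ((-14:ℝ)) * p 5 * p 6 ^ 3 * p 7 *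 p 11 + ((-6:ℝ)) * p 5 ^ 2 * p 7 ^ 3 * p 10 + (6:ℝ) * p 5 ^ 2 * p 6 * p 7 ^ 2 * p 11 := by
  simp [GP, pderiv_mul, pderiv_pow, pderiv_C, pderiv_one]
  ring

lemma evalpdGP9 (p : Jet) : MvPolynomial.eval p (MvPolynomial.pderiv 9 GP) = (6:ℝ) * p 6 ^ 3 * p 7 ^ 2 * p 8 + ((-6:ℝ)) * p 5 * p 6 * p 7 ^ 3 * p 8 + ((-18:ℝ)) * p 5 * p 6 ^ 2 * p 7 ^ 2 * p 9 + (18:ℝ) * p 5 * p 6 ^ 3 * p 7 * p 10 + ((-12:ℝ)) * p 5 * p 6 ^ 4 * p 11 + (18:ℝ) * p 5 ^ 2 * p 7 ^ 3 * p 9 + ((-18:ℝ)) * p 5 ^ 2 * p 6 * p 7 ^ 2 * p 10 + (18:ℝ) * p 5 ^ 2 * p 6 ^ 2 * p 7 * p 11 + ((-6:ℝ)) * p 5 ^ 3 * p 7 ^ 2 * p 11 := by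
  simp [GP, pderiv_mul, pderiv_pow, pderiv_C, pderiv_one]
  ring

lemma evalpdGP10 (p : Jet) : MvPolynomial.eval p (MvPolynomial.pderiv 10 GP) = ((-12:ℝ)) * p 6 ^ 4 * p 7 * p 8 + (18:ℝ) * p 5 * p 6 ^ 2 * p 7 ^ 2 * p 8 + (18:ℝ) * p 5 * p 6 ^ 3 * p 7 * p 9 + ((-6:ℝ)) * p 5 ^ 2 * p 7 ^ 3 * p 8 + ((-18:ℝ)) * p 5 ^ 2 * p 6 * p 7 ^ 2 * p 9 + ((-18:ℝ)) * p 5 ^ 2 * p 6 ^ 2 * p 7 * p 10 + (6:ℝ) * p 5 ^ 2 * p 6 ^ 3 * p 11 + (18:ℝ) * p 5 ^ 3 * p 7 ^ 2 * p 10 + ((-6:ℝ)) * p 5 ^ 3 * p 6 * p 7 * p 11 := by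
  simp [GP, pderiv_mul, pderiv_pow, pderiv_C, pderiv_one]
  ring

lemma evalpdGP11 (p : Jet) : MvPolynomial.eval p (MvPolynomial.pderiv 11 GP) = (8:ℝ) * p 6 ^ 5 * p 8 + ((-14:ℝ)) * p 5 * p 6 ^ 3 * p 7 * p 8 + ((-12:ℝ)) * p 5 * p 6 ^ 4 * p 9 + (6:ℝ) * p 5 ^ 2 * p 6 * p 7 ^ 2 * p 8 + (18:ℝ) * p 5 ^ 2 * p 6 ^ 2 * p 7 * p 9 + (6:ℝ) * p 5 ^ 2 * p 6 ^ 3 * p 10 + ((-6:ℝ)) * p 5 ^ 3 * p 7 ^ 2 * p 9 + ((-6:ℝ)) * p 5 ^ 3 * p 6 * p 7 * p 10 + ((-2:ℝ)) * p 5 ^ 3 * p 6 ^ 2 * p 11 + (2:ℝ) * p 5 ^ 4 * p 7 * p 11 := by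
  simp [GP, pderiv_mul, pderiv_pow, pderiv_C, pderiv_one]
  ring

set_option maxHeartbeats 4000000 in
lemma case_dx (p : Jet) :
    prol3 (fun _ => 1 : Jet → ℝ) (fun _ => 0 : Jet → ℝ) (fun _ => 0 : Jet → ℝ) Gfun p
      = eval p (0 : MvPolynomial (Fin 12) ℝ) * Gfun p := by
  rw [Gfun_eq, one_eq, zero_eq]
  rw [prol3_eval]
  simp [pprol3, pDx, pDy, pderiv_mul, pderiv_pow, pderiv_C, pderiv_one,
    evalpdGP0, evalpdGP1, evalpdGP2, evalpdGP3, evalpdGP4, evalpdGP5, evalpdGP6,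
    evalpdGP7, evalpdGP8, evalpdGP9, evalpdGP10, evalpdGP11, GP, Gfun, Fpoly]
  try ring

set_option maxHeartbeats 4000000 in
lemma case_dy (p : Jet) :
    prol3 (fun _ => 0 : Jet → ℝ) (fun _ => 1 : Jet → ℝ) (fun _ => 0 : Jet → ℝ) Gfun p
      = eval p (0 : MvPolynomial (Fin 12) ℝ) * Gfun p := by
  rw [Gfun_eq, zero_eq, one_eq]
  rw [prol3_eval]
  simp [pprol3, pDx, pDy, pderiv_mul, pderiv_pow, pderiv_C, pderiv_one,
    evalpdGP0, evalpdGP1, evalpdGP2, evalpdGP3, evalpdGP4, evalpdGP5, evalpdGP6,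
    evalpdGP7, evalpdGP8, evalpdGP9, evalpdGP10, evalpdGP11, GP, Gfun, Fpoly]
  try ring

set_option maxHeartbeats 4000000 in
lemma case_du (p : Jet) :
    prol3 (fun _ => 0 : Jet → ℝ) (fun _ => 0 : Jet → ℝ) (fun _ => 1 : Jet → ℝ) Gfun p
      = eval p (0 : MvPolynomial (Fin 12) ℝ) * Gfun p := by
  rw [Gfun_eq, zero_eq, one_eq]
  rw [prol3_eval]
  simp [pprol3, pDx, pDy, pderiv_mul, pderiv_pow, pderiv_C, pderiv_one,
    evalpdGP0, evalpdGP1, evalpdGP2, evalpdGP3, evalpdGP4, evalpdGP5, evalpdGP6,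
    evalpdGP7, evalpdGP8, evalpdGP9, evalpdGP10, evalpdGP11, GP, Gfun, Fpoly]
  try ring

set_option maxHeartbeats 4000000 in
lemma case_xdx (p : Jet) :
    prol3 (fun p => p 0 : Jet → ℝ) (fun _ => 0 : Jet → ℝ) (fun _ => 0 : Jet → ℝ) Gfun p
      = eval p (C (-8) : MvPolynomial (Fin 12) ℝ) * Gfun p := by
  rw [Gfun_eq, coord_eq 0, zero_eq]
  rw [prol3_eval]
  simp [pprol3, pDx, pDy, pderiv_mul, pderiv_pow, pderiv_C, pderiv_one,
    evalpdGP0, evalpdGP1, evalpdGP2, evalpdGP3, evalpdGP4, evalpdGP5, evalpdGP6,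
    evalpdGP7, evalpdGP8, evalpdGP9, evalpdGP10, evalpdGP11, GP, Gfun, Fpoly]
  try ring

set_option maxHeartbeats 4000000 in
lemma case_xdy (p : Jet) :
    prol3 (fun _ => 0 : Jet → ℝ) (fun p => p 0 : Jet → ℝ) (fun _ => 0 : Jet → ℝ) Gfun p
      = eval p (0 : MvPolynomial (Fin 12) ℝ) * Gfun p := by
  rw [Gfun_eq, zero_eq, coord_eq 0]
  rw [prol3_eval]
  simp [pprol3, pDx, pDy, pderiv_mul, pderiv_pow, pderiv_C, pderiv_one,
    evalpdGP0, evalpdGP1, evalpdGP2, evalpdGP3, evalpdGP4, evalpdGP5, evalpdGP6,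
    evalpdGP7, evalpdGP8, evalpdGP9, evalpdGP10, evalpdGP11, GP, Gfun, Fpoly]
  try ring

set_option maxHeartbeats 4000000 in
lemma case_xdu (p : Jet) :
    prol3 (fun _ => 0 : Jet → ℝ) (fun _ => 0 : Jet → ℝ) (fun p => p 0 : Jet → ℝ) Gfun p
      = eval p (0 : MvPolynomial (Fin 12) ℝ) * Gfun p := by
  rw [Gfun_eq, zero_eq, coord_eq 0]
  rw [prol3_eval]
  simp [pprol3, pDx, pDy, pderiv_mul, pderiv_pow, pderiv_C, pderiv_one,
    evalpdGP0, evalpdGP1, evalpdGP2, evalpdGP3, evalpdGP4, evalpdGP5, evalpdGP6,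
    evalpdGP7, evalpdGP8, evalpdGP9, evalpdGP10, evalpdGP11, GP, Gfun, Fpoly]
  try ring

set_option maxHeartbeats 4000000 in
lemma case_ydx (p : Jet) :
    prol3 (fun p => p 1 : Jet → ℝ) (fun _ => 0 : Jet → ℝ) (fun _ => 0 : Jet → ℝ) Gfun p
      = eval p (0 : MvPolynomial (Fin 12) ℝ) * Gfun p := by
  rw [Gfun_eq, coord_eq 1, zero_eq]
  rw [prol3_eval]
  simp [pprol3, pDx, pDy, pderiv_mul, pderiv_pow, pderiv_C, pderiv_one,
    evalpdGP0, evalpdGP1, evalpdGP2, evalpdGP3, evalpdGP4, evalpdGP5, evalpdGP6,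
    evalpdGP7, evalpdGP8, evalpdGP9, evalpdGP10, evalpdGP11, GP, Gfun, Fpoly]
  try ring

set_option maxHeartbeats 4000000 in
lemma case_ydy (p : Jet) :
    prol3 (fun _ => 0 : Jet → ℝ) (fun p => p 1 : Jet → ℝ) (fun _ => 0 : Jet → ℝ) Gfun p
      = eval p (C (-8) : MvPolynomial (Fin 12) ℝ) * Gfun p := by
  rw [Gfun_eq, zero_eq, coord_eq 1]
  rw [prol3_eval]
  simp [pprol3, pDx, pDy, pderiv_mul, pderiv_pow, pderiv_C, pderiv_one,
    evalpdGP0, evalpdGP1, evalpdGP2, evalpdGP3, evalpdGP4, evalpdGP5, evalpdGP6,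
    evalpdGP7, evalpdGP8, evalpdGP9, evalpdGP10, evalpdGP11, GP, Gfun, Fpoly]
  try ring

set_option maxHeartbeats 4000000 in
lemma case_ydu (p : Jet) :
    prol3 (fun _ => 0 : Jet → ℝ) (fun _ => 0 : Jet → ℝ) (fun p => p 1 : Jet → ℝ) Gfun p
      = eval p (0 : MvPolynomial (Fin 12) ℝ) * Gfun p := by
  rw [Gfun_eq, zero_eq, coord_eq 1]
  rw [prol3_eval]
  simp [pprol3, pDx, pDy, pderiv_mul, pderiv_pow, pderiv_C, pderiv_one,
    evalpdGP0, evalpdGP1, evalpdGP2, evalpdGP3, evalpdGP4, evalpdGP5, evalpdGP6,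
    evalpdGP7, evalpdGP8, evalpdGP9, evalpdGP10, evalpdGP11, GP, Gfun, Fpoly]
  try ring

set_option maxHeartbeats 4000000 in
lemma case_udx (p : Jet) :
    prol3 (fun p => p 2 : Jet → ℝ) (fun _ => 0 : Jet → ℝ) (fun _ => 0 : Jet → ℝ) Gfun p
      = eval p (C (-15) * X 3 : MvPolynomial (Fin 12) ℝ) * Gfun p := by
  rw [Gfun_eq, coord_eq 2, zero_eq]
  rw [prol3_eval]
  simp [pprol3, pDx, pDy, pderiv_mul, pderiv_pow, pderiv_C, pderiv_one,
    evalpdGP0, evalpdGP1, evalpdGP2, evalpdGP3, evalpdGP4, evalpdGP5, evalpdGP6,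
    evalpdGP7, evalpdGP8, evalpdGP9, evalpdGP10, evalpdGP11, GP, Gfun, Fpoly]
  try ring

set_option maxHeartbeats 4000000 in
lemma case_udy (p : Jet) :
    prol3 (fun _ => 0 : Jet → ℝ) (fun p => p 2 : Jet → ℝ) (fun _ => 0 : Jet → ℝ) Gfun p
      = eval p (C (-15) * X 4 : MvPolynomial (Fin 12) ℝ) * Gfun p := by
  rw [Gfun_eq, zero_eq, coord_eq 2]
  rw [prol3_eval]
  simp [pprol3, pDx, pDy, pderiv_mul, pderiv_pow, pderiv_C, pderiv_one,
    evalpdGP0, evalpdGP1, evalpdGP2, evalpdGP3, evalpdGP4, evalpdGP5, evalpdGP6,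
    evalpdGP7, evalpdGP8, evalpdGP9, evalpdGP10, evalpdGP11, GP, Gfun, Fpoly]
  try ring

set_option maxHeartbeats 4000000 in
lemma case_udu (p : Jet) :
    prol3 (fun _ => 0 : Jet → ℝ) (fun _ => 0 : Jet → ℝ) (fun p => p 2 : Jet → ℝ) Gfun p
      = eval p (C 7 : MvPolynomial (Fin 12) ℝ) * Gfun p := by
  rw [Gfun_eq, zero_eq, coord_eq 2]
  rw [prol3_eval]
  simp [pprol3, pDx, pDy, pderiv_mul, pderiv_pow, pderiv_C, pderiv_one,
    evalpdGP0, evalpdGP1, evalpdGP2, evalpdGP3, evalpdGP4, evalpdGP5, evalpdGP6,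
    evalpdGP7, evalpdGP8, evalpdGP9, evalpdGP10, evalpdGP11, GP, Gfun, Fpoly]
  try ring

theorem stmt3 :
    ∀ X ∈ affGenerators, ∃ lam : MvPolynomial (Fin 12) ℝ,
      ∀ p : Jet, prol3 X.1 X.2.1 X.2.2 Gfun p = MvPolynomial.eval p lam * Gfun p := by
  intro X hX
  fin_cases hX
  · exact ⟨0, case_dx⟩
  · exact ⟨0, case_dy⟩
  · exact ⟨0, case_du⟩
  · exact ⟨C (-8), case_xdx⟩
  · exact ⟨0, case_xdy⟩
  · exact ⟨0, case_xdu⟩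
  · exact ⟨0, case_ydx⟩
  · exact ⟨C (-8), case_ydy⟩
  · exact ⟨0, case_ydu⟩
  · exact ⟨C (-15) * X 3, case_udx⟩
  · exact ⟨C (-15) * X 4, case_udy⟩
  · exact ⟨C 7, case_udu⟩


end
end

section
/- Let u_xx, u_xy, u_yy, u_xxx, u_xxy, u_xyy, u_yyy be real numbers with u_xx·u_yy − u_xy² > 0. Then the following are equivalent: (i) there exist real numbers α₁, α₂ such that u_xxx = α₁·u_xx, 3·u_xxy = α₂·u_xx + 2·α₁·u_xy, 3·u_xyy = α₁·u_yy + 2·α₂·u_xy, and u_yyy = α₂·u_yy (i.e. the cubic form u_xxx·dx³ + 3u_xxy·dx²dy + 3u_xyy·dxdy² + u_yyy·dy³ equals (α₁dx + α₂dy)·(u_xx·dx² + 2u_xy·dxdy + u_yy·dy²)); (ii) u_xx²·u_yyy − 3·u_xx·u_yy·u_xxy + 2·u_xy·u_yy·u_xxx = 0 and u_yy²·u_xxx − 3·u_xx·u_yy·u_xyy + 2·u_xy·u_xx·u_yyy = 0. -/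
theorem stmt4 (uxx uxy uyy uxxx uxxy uxyy uyyy : ℝ)
    (hpos : uxx*uyy - uxy^2 > 0) :
    (∃ α₁ α₂ : ℝ,
        uxxx = α₁*uxx ∧
        3*uxxy = α₂*uxx + 2*α₁*uxy ∧
        3*uxyy = α₁*uyy + 2*α₂*uxy ∧
        uyyy = α₂*uyy)
    ↔ (uxx^2*uyyy - 3*uxx*uyy*uxxy + 2*uxy*uyy*uxxx = 0 ∧
       uyy^2*uxxx - 3*uxx*uyy*uxyy + 2*uxy*uxx*uyyy = 0) := by
  have hxx : uxx ≠ 0 := by intro h; rw [h] at hpos; nlinarith [sq_nonneg uxy]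
  have hyy : uyy ≠ 0 := by intro h; rw [h] at hpos; nlinarith [sq_nonneg uxy]
  constructor
  · rintro ⟨a, b, h1, h2, h3, h4⟩
    exact ⟨by linear_combination uxx^2*h4 - uxx*uyy*h2 + 2*uxy*uyy*h1,
        by linear_combination uyy^2*h1 - uxx*uyy*h3 + 2*uxy*uxx*h4⟩
  · rintro ⟨e1, e2⟩
    refine ⟨uxxx/uxx, uyyy/uyy, by field_simp, ?_, ?_, by field_simp⟩
    · field_simp
      nlinarith [e1]
    · field_simp
      nlinarith [e2]
end

section
/- Let u_xx, u_xy, u_yy, u_xxx, u_xxy, u_xyy, u_yyy be real numbers with D := u_xx·u_yy − u_xy² < 0 and u_yy ≠ 0, and set r := √(u_xy² − u_xx·u_yy). Then the following are equivalent: (i) there exist ε ∈ {+1, −1} and real numbers α₁, α₂, β₁₁, β₁₂, β₂₂ such that, with c := u_xy + ε·r, one has u_xxx = α₁·u_xx + β₁₁·c, 3·u_xxy = α₂·u_xx + 2·α₁·u_xy + β₁₁·u_yy + 2·β₁₂·c, 3·u_xyy = α₁·u_yy + 2·α₂·u_xy + 2·β₁₂·u_yy + β₂₂·c, and u_yyy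 = α₂·u_yy + β₂₂·u_yy (i.e. the cubic form of third derivatives equals (α₁dx+α₂dy)·(u_xx dx²+2u_xy dxdy+u_yy dy²) + (β₁₁dx²+2β₁₂dxdy+β₂₂dy²)·(c·dx + u_yy·dy)); (ii) f₁·f₂ = 0, where f₁ := r·Q + P and f₂ := r·Q − P with Q := u_xx·u_yy·u_yyy − 3·u_xxy·u_yy² − 4·u_xy²·u_yyy + 6·u_xy·u_xyy·u_yy and P := −3·u_xx·u_xy·u_yy·u_yyy + 3·u_xx·u_xyy·u_yy² − u_xxx·u_yy³ + 3·u_xxy·u_xy·u_yy² + 4·u_xy³·u_yyy − 6·u_xy²·u_xyy·u_yy. -/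
theorem aux5 (uxx uxy uyy uxxx uxxy uxyy uyyy r : ℝ)
    (hyy : uyy ≠ 0) (hr : r^2 = uxy^2 - uxx*uyy) :
    ((∃ ε : ℝ, (ε = 1 ∨ ε = -1) ∧
        ∃ α₁ α₂ β₁₁ β₁₂ β₂₂ : ℝ,
          uxxx = α₁*uxx + β₁₁*(uxy + ε*r) ∧
          3*uxxy = α₂*uxx + 2*α₁*uxy + β₁₁*uyy + 2*β₁₂*(uxy + ε*r) ∧
          3*uxyy = α₁*uyy + 2*α₂*uxy + 2*β₁₂*uyy + β₂₂*(uxy + ε*r) ∧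
          uyyy = α₂*uyy + β₂₂*uyy)
      ↔ (r*(uxx*uyy*uyyy - 3*uxxy*uyy^2 - 4*uxy^2*uyyy + 6*uxy*uxyy*uyy) + (-3*uxx*uxy*uyy*uyyy + 3*uxx*uxyy*uyy^2 - uxxx*uyy^3 + 3*uxxy*uxy*uyy^2 + 4*uxy^3*uyyy - 6*uxy^2*uxyy*uyy)) * (r*(uxx*uyy*uyyy - 3*uxxy*uyy^2 - 4*uxy^2*uyyy + 6*uxy*uxyy*uyy) - (-3*uxx*uxy*uyy*uyyy + 3*uxx*uxyy*uyy^2 - uxxx*uyy^3 + 3*uxxy*uxy*uyy^2 + 4*uxy^3*uyyy - 6*uxy^2*uxyy*uyy)) = 0) := by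
  constructor
  · rintro ⟨ε, rfl | rfl, α₁, α₂, β₁₁, β₁₂, β₂₂, h1, h2, h3, h4⟩
    · have key : (-3*uxx*uxy*uyy*uyyy + 3*uxx*uxyy*uyy^2 - uxxx*uyy^3 + 3*uxxy*uxy*uyy^2 + 4*uxy^3*uyyy - 6*uxy^2*uxyy*uyy) = r*(uxx*uyy*uyyy - 3*uxxy*uyy^2 - 4*uxy^2*uyyy + 6*uxy*uxyy*uyy) := by
        linear_combination (uxy + 1*r)^3*h4 - (uxy + 1*r)^2*uyy*h3 + (uxy + 1*r)*uyy^2*h2 - uyy^3*h1 + ((uxy + 1*r)*uyy*α₂ - uyy^2*α₁ - 2*uxy*uyyy - (uxy + 1*r)*uyyy + 3*uyy*uxyy)*hr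
      linear_combination (-(r*(uxx*uyy*uyyy - 3*uxxy*uyy^2 - 4*uxy^2*uyyy + 6*uxy*uxyy*uyy) + (-3*uxx*uxy*uyy*uyyy + 3*uxx*uxyy*uyy^2 - uxxx*uyy^3 + 3*uxxy*uxy*uyy^2 + 4*uxy^3*uyyy - 6*uxy^2*uxyy*uyy)))*key
    · have key : (-3*uxx*uxy*uyy*uyyy + 3*uxx*uxyy*uyy^2 - uxxx*uyy^3 + 3*uxxy*uxy*uyy^2 + 4*uxy^3*uyyy - 6*uxy^2*uxyy*uyy) = -(r*(uxx*uyy*uyyy - 3*uxxy*uyy^2 - 4*uxy^2*uyyy + 6*uxy*uxyy*uyy)) := by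
        linear_combination (uxy + (-1)*r)^3*h4 - (uxy + (-1)*r)^2*uyy*h3 + (uxy + (-1)*r)*uyy^2*h2 - uyy^3*h1 + ((uxy + (-1)*r)*uyy*α₂ - uyy^2*α₁ - 2*uxy*uyyy - (uxy + (-1)*r)*uyyy + 3*uyy*uxyy)*hr
      linear_combination (r*(uxx*uyy*uyyy - 3*uxxy*uyy^2 - 4*uxy^2*uyyy + 6*uxy*uxyy*uyy) - (-3*uxx*uxy*uyy*uyyy + 3*uxx*uxyy*uyy^2 - uxxx*uyy^3 + 3*uxxy*uxy*uyy^2 + 4*uxy^3*uyyy - 6*uxy^2*uxyy*uyy))*key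
  · intro h
    rcases mul_eq_zero.mp h with hc | hc
    · -- r*q + p = 0, take ε = -1
      have keyF : uxxx*uyy^3 = (uxy + (-1)*r)^3*uyyy - 3*(uxy + (-1)*r)^2*uyy*uxyy
          + 3*(uxy + (-1)*r)*uyy^2*uxxy := by
        linear_combination -hc + (3*uyy*uxyy - (2*uxy + (uxy + (-1)*r))*uyyy)*hr
      refine ⟨-1, Or.inr rfl, 0, uyyy/uyy,
        (3*uxxy - (uyyy/uyy)*uxx - 2*((3*uxyy - 2*(uyyy/uyy)*uxy)/(2*uyy))*(uxy + (-1)*r))/uyy,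
        (3*uxyy - 2*(uyyy/uyy)*uxy)/(2*uyy), 0, ?_, ?_, ?_, ?_⟩
      · field_simp
        linear_combination keyF + ((uxy - r)*uyyy)*hr
      · field_simp
        ring
      · field_simp
        ring
      · field_simp
        ring
    · -- r*q - p = 0, take ε = 1
      have keyF : uxxx*uyy^3 = (uxy + 1*r)^3*uyyy - 3*(uxy + 1*r)^2*uyy*uxyy
          + 3*(uxy + 1*r)*uyy^2*uxxy := by
        linear_combination hc + (3*uyy*uxyy - (2*uxy + (uxy + 1*r))*uyyy)*hr
      refine ⟨1, Or.inl rfl, 0, uyyy/uyy,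
        (3*uxxy - (uyyy/uyy)*uxx - 2*((3*uxyy - 2*(uyyy/uyy)*uxy)/(2*uyy))*(uxy + 1*r))/uyy,
        (3*uxyy - 2*(uyyy/uyy)*uxy)/(2*uyy), 0, ?_, ?_, ?_, ?_⟩
      · field_simp
        linear_combination keyF + ((uxy + r)*uyyy)*hr
      · field_simp
        ring
      · field_simp
        ring
      · field_simp
        ring

theorem stmt5 (uxx uxy uyy uxxx uxxy uxyy uyyy : ℝ)
    (hD : uxx*uyy - uxy^2 < 0) (hyy : uyy ≠ 0) :
    let r := Real.sqrt (uxy^2 - uxx*uyy)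
    let Q := uxx*uyy*uyyy - 3*uxxy*uyy^2 - 4*uxy^2*uyyy + 6*uxy*uxyy*uyy
    let P := -3*uxx*uxy*uyy*uyyy + 3*uxx*uxyy*uyy^2 - uxxx*uyy^3
      + 3*uxxy*uxy*uyy^2 + 4*uxy^3*uyyy - 6*uxy^2*uxyy*uyy
    ((∃ ε : ℝ, (ε = 1 ∨ ε = -1) ∧
        ∃ α₁ α₂ β₁₁ β₁₂ β₂₂ : ℝ,
          uxxx = α₁*uxx + β₁₁*(uxy + ε*r) ∧
          3*uxxy = α₂*uxx + 2*α₁*uxy + β₁₁*uyy + 2*β₁₂*(uxy + ε*r) ∧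
          3*uxyy = α₁*uyy + 2*α₂*uxy + 2*β₁₂*uyy + β₂₂*(uxy + ε*r) ∧
          uyyy = α₂*uyy + β₂₂*uyy)
      ↔ (r*Q + P) * (r*Q - P) = 0) := by
  intro r Q P
  have hr : r^2 = uxy^2 - uxx*uyy := Real.sq_sqrt (by linarith)
  have := aux5 uxx uxy uyy uxxx uxxy uxyy uyyy r hyy hr
  exact this
end

section
/- Let u_xx, u_xy, u_yy, u_xxx, u_xxy, u_xyy, u_yyy and r be real numbers with r² = u_xy² − u_xx·u_yy. Then (r·Q + P)·(r·Q − P) = −u_yy³·F, where Q := u_xx·u_yy·u_yyy − 3·u_xxy·u_yy² − 4·u_xy²·u_yyy + 6·u_xy·u_xyy·u_yy and P := −3·u_xx·u_xy·u_yy·u_yyy + 3·u_xx·u_xyy·u_yy² − u_xxx·u_yy³ + 3·u_xxy·u_xy·u_yy² + 4·u_xy³·u_yyy − 6·u_xy²·u_xyy·u_yy. In particular, when u_xx·u_yy − u_xy² < 0 and u_yy ≠ 0, the equation F = 0 is the union of the two scalar equations r·Q + P = 0 and r·Q − P = 0. -/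
theorem stmt6 (uxx uxy uyy uxxx uxxy uxyy uyyy r : ℝ)
    (hr : r^2 = uxy^2 - uxx*uyy) :
    let Q := uxx*uyy*uyyy - 3*uxxy*uyy^2 - 4*uxy^2*uyyy + 6*uxy*uxyy*uyy
    let P := -3*uxx*uxy*uyy*uyyy + 3*uxx*uxyy*uyy^2 - uxxx*uyy^3
      + 3*uxxy*uxy*uyy^2 + 4*uxy^3*uyyy - 6*uxy^2*uxyy*uyy
    (r*Q + P) * (r*Q - P) = -uyy^3 * Fpoly uxx uxy uyy uxxx uxxy uxyy uyyy
    ∧ (uxx*uyy - uxy^2 < 0 → uyy ≠ 0 →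
        (Fpoly uxx uxy uyy uxxx uxxy uxyy uyyy = 0 ↔
          (r*Q + P = 0 ∨ r*Q - P = 0))) := by
  intro Q P
  have key : (r*Q + P) * (r*Q - P) = -uyy^3 * Fpoly uxx uxy uyy uxxx uxxy uxyy uyyy := by
    have : (r*Q + P) * (r*Q - P) = (r^2)*Q^2 - P^2 := by ring
    rw [this, hr]
    simp only [Q, P, Fpoly]
    ring
  refine ⟨key, fun _ huyy => ?_⟩
  constructor
  · intro hF
    have : (r*Q + P) * (r*Q - P) = 0 := by rw [key, hF]; ring
    rcases mul_eq_zero.mp this with h | h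
    · exact Or.inl h
    · exact Or.inr h
  · intro h
    have hz : (r*Q + P) * (r*Q - P) = 0 := by
      rcases h with h | h <;> rw [h] <;> ring
    rw [key] at hz
    have : uyy^3 ≠ 0 := pow_ne_zero _ huyy
    have := mul_eq_zero.mp hz
    rcases this with h | h
    · exact absurd (neg_eq_zero.mp h) this
    · exact h
end

section
/- Let u_x, u_y be real numbers, let (u_ij) (i,j ∈ {1,2}) be a symmetric family of reals with u₁₁·u₂₂ − u₁₂² > 0, and let (u_ijk) be a totally symmetric family of reals. For ξ = (ξ¹, ξ², ξ³) ∈ ℝ³ with A(ξ) := ξ³ − ξ¹·u_x − ξ²·u_y ≠ 0, define B := 1/A(ξ), h^ξ_ij := B·u_ij, λ^ξ_k := ξ¹·u_{1k} + ξ²·u_{2k}, and C^ξ_{kij} := B·u_{ijk} + B²·(λ^ξ_j·u_{ki} + λ^ξ_i·u_{kj} + λ^ξ_k·u_{ij}). Then for any two such vectors ξ and ξ' with A(ξ) ≠ 0 and A(ξ') ≠ 0, the following are equivalent: there exist α₁, α₂ ∈ ℝ with 3·C^ξ_{kij} = α_k·h^ξ_ij + α_i·h^ξ_kj + α_j·h^ξ_ki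 for all i, j, k ∈ {1,2}, if and only if there exist α'₁, α'₂ ∈ ℝ with 3·C^{ξ'}_{kij} = α'_k·h^{ξ'}_ij + α'_i·h^{ξ'}_kj + α'_j·h^{ξ'}_ki for all i, j, k. That is, in the positive-definite case the condition C^ξ = α ⊙ h^ξ is independent of the choice of the transversal field ξ. -/
noncomputable section

/-- Coordinate expression of the affine second fundamental form `h^ξ`
associated with the transversal field `ξ`. -/
def hCoef (ux uy : ℝ) (u2 : Fin 2 → Fin 2 → ℝ) (ξ : Fin 3 → ℝ) (i j : Fin 2) : ℝ :=
  (1 / (ξ 2 - ξ 0 * ux - ξ 1 * uy)) * u2 i j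

/-- Coordinate expression `C^ξ_{kij}` of the cubic form associated with the
transversal field `ξ`. -/
def cCoef (ux uy : ℝ) (u2 : Fin 2 → Fin 2 → ℝ) (u3 : Fin 2 → Fin 2 → Fin 2 → ℝ)
    (ξ : Fin 3 → ℝ) (k i j : Fin 2) : ℝ :=
  (1 / (ξ 2 - ξ 0 * ux - ξ 1 * uy)) * u3 i j k
  + (1 / (ξ 2 - ξ 0 * ux - ξ 1 * uy))^2 *
      ((ξ 0 * u2 0 j + ξ 1 * u2 1 j) * u2 k i
       + (ξ 0 * u2 0 i + ξ 1 * u2 1 i) * u2 k j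
       + (ξ 0 * u2 0 k + ξ 1 * u2 1 k) * u2 i j)

/-- The condition `C^ξ = α ⊙ h^ξ` for some 1-form `α`. -/
def condPlus (ux uy : ℝ) (u2 : Fin 2 → Fin 2 → ℝ) (u3 : Fin 2 → Fin 2 → Fin 2 → ℝ)
    (ξ : Fin 3 → ℝ) : Prop :=
  ∃ α : Fin 2 → ℝ, ∀ i j k : Fin 2,
    3 * cCoef ux uy u2 u3 ξ k i j =
      α k * hCoef ux uy u2 ξ i j + α i * hCoef ux uy u2 ξ k j
      + α j * hCoef ux uy u2 ξ k i

/-- `condPlus` is equivalent to the ξ-independent condition `3 u3 = β ⊙ u2`. -/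
lemma condPlus_iff (ux uy : ℝ) (u2 : Fin 2 → Fin 2 → ℝ) (u3 : Fin 2 → Fin 2 → Fin 2 → ℝ)
    (ξ : Fin 3 → ℝ) (hA : ξ 2 - ξ 0 * ux - ξ 1 * uy ≠ 0) :
    condPlus ux uy u2 u3 ξ ↔
      ∃ β : Fin 2 → ℝ, ∀ i j k : Fin 2,
        3 * u3 i j k = β k * u2 i j + β i * u2 k j + β j * u2 k i := by
  constructor
  · rintro ⟨α, hα⟩
    refine ⟨fun m => α m - 3 * (1 / (ξ 2 - ξ 0 * ux - ξ 1 * uy)) *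
      (ξ 0 * u2 0 m + ξ 1 * u2 1 m), fun i j k => ?_⟩
    have h := hα i j k
    unfold cCoef hCoef at h
    have hB : (1 / (ξ 2 - ξ 0 * ux - ξ 1 * uy)) ≠ 0 := one_div_ne_zero hA
    apply mul_left_cancel₀ hB
    linear_combination h
  · rintro ⟨β, hβ⟩
    refine ⟨fun m => β m + 3 * (1 / (ξ 2 - ξ 0 * ux - ξ 1 * uy)) *
      (ξ 0 * u2 0 m + ξ 1 * u2 1 m), fun i j k => ?_⟩
    have h := hβ i j k
    unfold cCoef hCoef
    linear_combination (1 / (ξ 2 - ξ 0 * ux - ξ 1 * uy)) * h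

theorem stmt7 (ux uy : ℝ) (u2 : Fin 2 → Fin 2 → ℝ) (u3 : Fin 2 → Fin 2 → Fin 2 → ℝ)
    (hsym2 : ∀ i j, u2 i j = u2 j i)
    (hsym3 : ∀ i j k, u3 i j k = u3 j i k ∧ u3 i j k = u3 i k j)
    (hpos : u2 0 0 * u2 1 1 - (u2 0 1)^2 > 0)
    (ξ ξ' : Fin 3 → ℝ)
    (hA : ξ 2 - ξ 0 * ux - ξ 1 * uy ≠ 0)
    (hA' : ξ' 2 - ξ' 0 * ux - ξ' 1 * uy ≠ 0) :
    condPlus ux uy u2 u3 ξ ↔ condPlus ux uy u2 u3 ξ' := by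
  rw [condPlus_iff ux uy u2 u3 ξ hA, condPlus_iff ux uy u2 u3 ξ' hA']

end
end

section
/- Let U ⊆ ℝ² be open and let u : ℝ² → ℝ be infinitely differentiable on U. Suppose that at every point of U one has u_xx·u_yy − u_xy² > 0 and u satisfies the system u_xx²·u_yyy − 3·u_xx·u_yy·u_xxy + 2·u_xy·u_yy·u_xxx = 0 and u_yy²·u_xxx − 3·u_xx·u_yy·u_xyy + 2·u_xy·u_xx·u_yyy = 0. Then at every point of U the fourth-order compatibility condition u_xy·u_yy·u_yyyy − 2·u_xy·u_yyy² + 2·u_xyy·u_yy·u_yyy − u_xyyy·u_yy² = 0 holds. -/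
noncomputable section

/-- Partial derivative with respect to the first variable `x`. -/
def px (f : ℝ × ℝ → ℝ) : ℝ × ℝ → ℝ := fun p => deriv (fun t => f (t, p.2)) p.1

/-- Partial derivative with respect to the second variable `y`. -/
def py (f : ℝ × ℝ → ℝ) : ℝ × ℝ → ℝ := fun p => deriv (fun t => f (p.1, t)) p.2

section Infra

variable {U : Set (ℝ × ℝ)} {f g : ℝ × ℝ → ℝ} {p : ℝ × ℝ}

lemma memX (hU : IsOpen U) (hp : p ∈ U) : {t : ℝ | (t, p.2) ∈ U} ∈ nhds p.1 :=
  (hU.preimage (continuous_id.prodMk continuous_const)).mem_nhds hp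

lemma memY (hU : IsOpen U) (hp : p ∈ U) : {t : ℝ | (p.1, t) ∈ U} ∈ nhds p.2 :=
  (hU.preimage (continuous_const.prodMk continuous_id)).mem_nhds hp

lemma sliceX' (hU : IsOpen U) (hf : ContDiffOn ℝ (⊤ : ℕ∞) f U) (hp : p ∈ U) :
    HasDerivAt (fun t => f (t, p.2)) (fderiv ℝ f p ((1 : ℝ), (0 : ℝ))) p.1 := by
  have hd : DifferentiableAt ℝ f p :=
    ((hf p hp).contDiffAt (hU.mem_nhds hp)).differentiableAt (by simp)
  exact hd.hasFDerivAt.comp_hasDerivAt p.1 ((hasDerivAt_id p.1).prodMk (hasDerivAt_const p.1 p.2))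

lemma sliceY' (hU : IsOpen U) (hf : ContDiffOn ℝ (⊤ : ℕ∞) f U) (hp : p ∈ U) :
    HasDerivAt (fun t => f (p.1, t)) (fderiv ℝ f p ((0 : ℝ), (1 : ℝ))) p.2 := by
  have hd : DifferentiableAt ℝ f p :=
    ((hf p hp).contDiffAt (hU.mem_nhds hp)).differentiableAt (by simp)
  exact hd.hasFDerivAt.comp_hasDerivAt p.2 ((hasDerivAt_const p.2 p.1).prodMk (hasDerivAt_id p.2))

lemma px_eq (hU : IsOpen U) (hf : ContDiffOn ℝ (⊤ : ℕ∞) f U) (hp : p ∈ U) :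
    px f p = fderiv ℝ f p ((1 : ℝ), (0 : ℝ)) := (sliceX' hU hf hp).deriv

lemma py_eq (hU : IsOpen U) (hf : ContDiffOn ℝ (⊤ : ℕ∞) f U) (hp : p ∈ U) :
    py f p = fderiv ℝ f p ((0 : ℝ), (1 : ℝ)) := (sliceY' hU hf hp).deriv

lemma sliceX (hU : IsOpen U) (hf : ContDiffOn ℝ (⊤ : ℕ∞) f U) (hp : p ∈ U) :
    HasDerivAt (fun t => f (t, p.2)) (px f p) p.1 := by
  rw [px_eq hU hf hp]; exact sliceX' hU hf hp

lemma sliceY (hU : IsOpen U) (hf : ContDiffOn ℝ (⊤ : ℕ∞) f U) (hp : p ∈ U) :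
    HasDerivAt (fun t => f (p.1, t)) (py f p) p.2 := by
  rw [py_eq hU hf hp]; exact sliceY' hU hf hp

lemma contDiffOn_fderiv (hU : IsOpen U) (hf : ContDiffOn ℝ (⊤ : ℕ∞) f U) :
    ContDiffOn ℝ (⊤ : ℕ∞) (fderiv ℝ f) U :=
  hf.fderiv_of_isOpen hU (le_of_eq rfl)

lemma contDiffOn_px (hU : IsOpen U) (hf : ContDiffOn ℝ (⊤ : ℕ∞) f U) :
    ContDiffOn ℝ (⊤ : ℕ∞) (px f) U :=
  ((contDiffOn_fderiv hU hf).clm_apply contDiffOn_const).congr fun _ hq => px_eq hU hf hq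

lemma contDiffOn_py (hU : IsOpen U) (hf : ContDiffOn ℝ (⊤ : ℕ∞) f U) :
    ContDiffOn ℝ (⊤ : ℕ∞) (py f) U :=
  ((contDiffOn_fderiv hU hf).clm_apply contDiffOn_const).congr fun _ hq => py_eq hU hf hq

lemma px_congr (hU : IsOpen U) (h : Set.EqOn f g U) (hp : p ∈ U) : px f p = px g p := by
  have hev : (fun t => f (t, p.2)) =ᶠ[nhds p.1] (fun t => g (t, p.2)) := by
    filter_upwards [memX hU hp] with t ht using h ht
  exact hev.deriv_eq

lemma py_congr (hU : IsOpen U) (h : Set.EqOn f g U) (hp : p ∈ U) : py f p = py g p := by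
  have hev : (fun t => f (p.1, t)) =ᶠ[nhds p.2] (fun t => g (p.1, t)) := by
    filter_upwards [memY hU hp] with t ht using h ht
  exact hev.deriv_eq

lemma swapXY (hU : IsOpen U) (hf : ContDiffOn ℝ (⊤ : ℕ∞) f U) (hp : p ∈ U) :
    px (py f) p = py (px f) p := by
  have hdfU : ContDiffOn ℝ (⊤ : ℕ∞) (fderiv ℝ f) U := contDiffOn_fderiv hU hf
  have hdd : DifferentiableAt ℝ (fderiv ℝ f) p :=
    ((hdfU p hp).contDiffAt (hU.mem_nhds hp)).differentiableAt (by simp)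
  have hsym : IsSymmSndFDerivAt ℝ f p :=
    ((hf p hp).contDiffAt (hU.mem_nhds hp)).isSymmSndFDerivAt (by simpa using WithTop.coe_le_coe.mpr (le_top : (2:ℕ∞) ≤ ⊤))
  have g01 : ContDiffOn ℝ (⊤ : ℕ∞) (fun q => fderiv ℝ f q ((0 : ℝ), (1 : ℝ))) U :=
    hdfU.clm_apply contDiffOn_const
  have g10 : ContDiffOn ℝ (⊤ : ℕ∞) (fun q => fderiv ℝ f q ((1 : ℝ), (0 : ℝ))) U :=
    hdfU.clm_apply contDiffOn_const
  have hc01 : HasFDerivAt (fun q => fderiv ℝ f q ((0 : ℝ), (1 : ℝ)))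
      ((ContinuousLinearMap.apply ℝ ℝ ((0 : ℝ), (1 : ℝ))).comp (fderiv ℝ (fderiv ℝ f) p)) p :=
    (ContinuousLinearMap.apply ℝ ℝ ((0 : ℝ), (1 : ℝ))).hasFDerivAt.comp p hdd.hasFDerivAt
  have hc10 : HasFDerivAt (fun q => fderiv ℝ f q ((1 : ℝ), (0 : ℝ)))
      ((ContinuousLinearMap.apply ℝ ℝ ((1 : ℝ), (0 : ℝ))).comp (fderiv ℝ (fderiv ℝ f) p)) p :=
    (ContinuousLinearMap.apply ℝ ℝ ((1 : ℝ), (0 : ℝ))).hasFDerivAt.comp p hdd.hasFDerivAt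
  calc px (py f) p = px (fun q => fderiv ℝ f q ((0 : ℝ), (1 : ℝ))) p :=
        px_congr hU (fun q hq => py_eq hU hf hq) hp
    _ = fderiv ℝ (fun q => fderiv ℝ f q ((0 : ℝ), (1 : ℝ))) p ((1 : ℝ), (0 : ℝ)) :=
        px_eq hU g01 hp
    _ = fderiv ℝ (fderiv ℝ f) p ((1 : ℝ), (0 : ℝ)) ((0 : ℝ), (1 : ℝ)) := by
        rw [hc01.fderiv]; simp
    _ = fderiv ℝ (fderiv ℝ f) p ((0 : ℝ), (1 : ℝ)) ((1 : ℝ), (0 : ℝ)) := hsym _ _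
    _ = fderiv ℝ (fun q => fderiv ℝ f q ((1 : ℝ), (0 : ℝ))) p ((0 : ℝ), (1 : ℝ)) := by
        rw [hc10.fderiv]; simp
    _ = py (fun q => fderiv ℝ f q ((1 : ℝ), (0 : ℝ))) p := (py_eq hU g10 hp).symm
    _ = py (px f) p := (py_congr hU (fun q hq => px_eq hU hf hq) hp).symm

end Infra

set_option maxHeartbeats 2000000 in
theorem stmt11 (U : Set (ℝ × ℝ)) (hU : IsOpen U) (u : ℝ × ℝ → ℝ)
    (hu : ContDiffOn ℝ (⊤ : ℕ∞) u U)
    (hpos : ∀ p ∈ U,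
      px (px u) p * py (py u) p - (py (px u) p)^2 > 0)
    (heq1 : ∀ p ∈ U,
      (px (px u) p)^2 * py (py (py u)) p
        - 3 * px (px u) p * py (py u) p * py (px (px u)) p
        + 2 * py (px u) p * py (py u) p * px (px (px u)) p = 0)
    (heq2 : ∀ p ∈ U,
      (py (py u) p)^2 * px (px (px u)) p
        - 3 * px (px u) p * py (py u) p * py (py (px u)) p
        + 2 * py (px u) p * px (px u) p * py (py (py u)) p = 0) :
    ∀ p ∈ U,
      py (px u) p * py (py u) p * py (py (py (py u))) p
        - 2 * py (px u) p * (py (py (py u)) p)^2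
        + 2 * py (py (px u)) p * py (py u) p * py (py (py u)) p
        - py (py (py (px u))) p * (py (py u) p)^2 = 0 := by
  have cu : ContDiffOn ℝ (⊤ : ℕ∞) u U := hu.of_le (by simp)
  have cux := contDiffOn_px hU cu
  have cuy := contDiffOn_py hU cu
  have cuxx := contDiffOn_px hU cux
  have cuxy := contDiffOn_py hU cux
  have cuyy := contDiffOn_py hU cuy
  have cuxxx := contDiffOn_px hU cuxx
  have cuxxy := contDiffOn_py hU cuxx
  have cuxyy := contDiffOn_py hU cuxy
  have cuyyy := contDiffOn_py hU cuyy
  -- Clairaut facts as EqOn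
  have swu : Set.EqOn (px (py u)) (py (px u)) U := fun q hq => swapXY hU cu hq
  have swux : Set.EqOn (px (py (px u))) (py (px (px u))) U := fun q hq => swapXY hU cux hq
  have e_xyy : Set.EqOn (px (py (py u))) (py (py (px u))) U := fun q hq =>
    (swapXY hU cuy hq).trans (py_congr hU swu hq)
  intro p hp
  -- point Clairaut conversions
  have w1 : px (py (px u)) p = py (px (px u)) p := swux hp
  have w2 : px (py (py u)) p = py (py (px u)) p := e_xyy hp
  have w3 : px (py (px (px u))) p = py (px (px (px u))) p := swapXY hU cuxx hp
  have w4 : px (py (py (px u))) p = py (py (px (px u))) p :=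
    (swapXY hU cuxy hp).trans (py_congr hU swux hp)
  have w5 : px (py (py (py u))) p = py (py (py (px u))) p :=
    (swapXY hU cuyy hp).trans (py_congr hU e_xyy hp)
  -- slice derivatives, y direction
  have gy_xx := sliceY hU cuxx hp
  have gy_xy := sliceY hU cuxy hp
  have gy_yy := sliceY hU cuyy hp
  have gy_xxx := sliceY hU cuxxx hp
  have gy_xxy := sliceY hU cuxxy hp
  have gy_xyy := sliceY hU cuxyy hp
  have gy_yyy := sliceY hU cuyyy hp
  -- slice derivatives, x direction
  have gx_xx := sliceX hU cuxx hp
  have gx_xy := sliceX hU cuxy hp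
  have gx_yy := sliceX hU cuyy hp
  have gx_xxx := sliceX hU cuxxx hp
  have gx_xxy := sliceX hU cuxxy hp
  have gx_xyy := sliceX hU cuxyy hp
  have gx_yyy := sliceX hU cuyyy hp
  -- zero derivatives of the equations along slices
  have z1y : HasDerivAt (fun t =>
      (px (px u) (p.1, t))^2 * py (py (py u)) (p.1, t)
        - 3 * px (px u) (p.1, t) * py (py u) (p.1, t) * py (px (px u)) (p.1, t)
        + 2 * py (px u) (p.1, t) * py (py u) (p.1, t) * px (px (px u)) (p.1, t)) 0 p.2 := by
    refine (hasDerivAt_const p.2 (0 : ℝ)).congr_of_eventuallyEq ?_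
    filter_upwards [memY hU hp] with t ht using heq1 (p.1, t) ht
  have z2y : HasDerivAt (fun t =>
      (py (py u) (p.1, t))^2 * px (px (px u)) (p.1, t)
        - 3 * px (px u) (p.1, t) * py (py u) (p.1, t) * py (py (px u)) (p.1, t)
        + 2 * py (px u) (p.1, t) * px (px u) (p.1, t) * py (py (py u)) (p.1, t)) 0 p.2 := by
    refine (hasDerivAt_const p.2 (0 : ℝ)).congr_of_eventuallyEq ?_
    filter_upwards [memY hU hp] with t ht using heq2 (p.1, t) ht
  have z1x : HasDerivAt (fun t =>
      (px (px u) (t, p.2))^2 * py (py (py u)) (t, p.2)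
        - 3 * px (px u) (t, p.2) * py (py u) (t, p.2) * py (px (px u)) (t, p.2)
        + 2 * py (px u) (t, p.2) * py (py u) (t, p.2) * px (px (px u)) (t, p.2)) 0 p.1 := by
    refine (hasDerivAt_const p.1 (0 : ℝ)).congr_of_eventuallyEq ?_
    filter_upwards [memX hU hp] with t ht using heq1 (t, p.2) ht
  have z2x : HasDerivAt (fun t =>
      (py (py u) (t, p.2))^2 * px (px (px u)) (t, p.2)
        - 3 * px (px u) (t, p.2) * py (py u) (t, p.2) * py (py (px u)) (t, p.2)
        + 2 * py (px u) (t, p.2) * px (px u) (t, p.2) * py (py (py u)) (t, p.2)) 0 p.1 := by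
    refine (hasDerivAt_const p.1 (0 : ℝ)).congr_of_eventuallyEq ?_
    filter_upwards [memX hU hp] with t ht using heq2 (t, p.2) ht
  -- product-rule values
  have hDy1 := (((gy_xx.pow 2).mul gy_yyy).sub
      (((gy_xx.const_mul (3 : ℝ)).mul gy_yy).mul gy_xxy)).add
      (((gy_xy.const_mul (2 : ℝ)).mul gy_yy).mul gy_xxx) |>.unique z1y
  have hDy2 := (((gy_yy.pow 2).mul gy_xxx).sub
      (((gy_xx.const_mul (3 : ℝ)).mul gy_yy).mul gy_xyy)).add
      (((gy_xy.const_mul (2 : ℝ)).mul gy_xx).mul gy_yyy) |>.unique z2y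
  have hDx1 := (((gx_xx.pow 2).mul gx_yyy).sub
      (((gx_xx.const_mul (3 : ℝ)).mul gx_yy).mul gx_xxy)).add
      (((gx_xy.const_mul (2 : ℝ)).mul gx_yy).mul gx_xxx) |>.unique z1x
  have hDx2 := (((gx_yy.pow 2).mul gx_xxx).sub
      (((gx_xx.const_mul (3 : ℝ)).mul gx_yy).mul gx_xyy)).add
      (((gx_xy.const_mul (2 : ℝ)).mul gx_xx).mul gx_yyy) |>.unique z2x
  simp only [Prod.mk.eta, Pi.mul_apply, Pi.pow_apply, Nat.reduceSub, pow_one, Nat.cast_ofNat] at hDy1 hDy2 hDx1 hDx2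
  rw [w1, w2, w3, w5] at hDx1
  rw [w1, w2, w4, w5] at hDx2
  have h1 := heq1 p hp
  have h2 := heq2 p hp
  have hdet := hpos p hp
  set va := px (px u) p with hva
  set vb := py (px u) p with hvb
  set vc := py (py u) p with hvc
  set vA := px (px (px u)) p with hvA
  set vB := py (px (px u)) p with hvB
  set vC := py (py (px u)) p with hvC
  set vE := py (py (py u)) p with hvE
  set vP := py (px (px (px u))) p with hvP
  set vQ := py (py (px (px u))) p with hvQ
  set vR := py (py (py (px u))) p with hvR
  set vS := py (py (py (py u))) p with hvS
  set vT := px (px (px (px u))) p with hvT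
  have hac : va * vc > 0 := by nlinarith [sq_nonneg vb]
  have hMU : (648 : ℝ) * va^5 * vc^14 * (va * vc - vb^2) ≠ 0 := by
    have h648 : (648 : ℝ) ≠ 0 := by norm_num
    have ha : va ≠ 0 := left_ne_zero_of_mul hac.ne'
    have hc : vc ≠ 0 := right_ne_zero_of_mul hac.ne'
    exact mul_ne_zero (mul_ne_zero (mul_ne_zero h648 (pow_ne_zero _ ha)) (pow_ne_zero _ hc))
      (by nlinarith [sq_nonneg vb])
  have key : (648 : ℝ) * va^5 * vc^14 * (va * vc - vb^2) *
      (vb * vc * vS - 2 * vb * vE^2 + 2 * vC * vc * vE - vR * vc^2) = 0 := by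
    linear_combination (81 * va^4 * vc^17) * hDx1
      + (162 * va^4 * vb * vc^16) * hDy1
      + (243 * va^5 * vc^16 - 324 * va^4 * vb^2 * vc^15) * hDy2
      + (-162 * va^4 * vb * vc^16) * hDx2
      + (-108 * va^2 * vb^2 * vc^16 * vA - 27 * va^3 * vc^17 * vA - 162 * va^3 * vb * vc^16 * vB
          + 324 * va^3 * vb^2 * vc^15 * vC - 216 * va^3 * vb^3 * vc^14 * vE
          - 324 * va^4 * vc^16 * vC - 54 * va^4 * vb * vc^15 * vE) * h1
      + (216 * va^2 * vb^3 * vc^15 * vA + 54 * va^3 * vb * vc^16 * vA + 162 * va^4 * vb * vc^15 * vC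
          + 756 * va^4 * vb^2 * vc^14 * vE - 621 * va^5 * vc^15 * vE) * h2
  have := mul_eq_zero.mp key
  have hfin := this.resolve_left hMU
  linarith [hfin]

end
end

section
/- Let I ⊆ ℝ be an open interval, let v : ℝ → ℝ be five times continuously differentiable on I, and let a, b, c, d, e, g be real constants such that a·v(y)² + b·y·v(y) + c·y² + d·v(y) + e·y + g = 0 for all y ∈ I, and such that 2·a·v(y) + b·y + d ≠ 0 for all y ∈ I. Then 9·v''(y)²·v⁽⁵⁾(y) − 45·v''(y)·v'''(y)·v''''(y) + 40·v'''(y)³ = 0 for all y ∈ I. (This is one direction of the statement that the solutions of 9·u_yy²·u_yyyyy − 45·u_yy·u_yyy·u_yyyy + 40·u_yyy³ = 0 are exactly the conics in the (y,u)-plane.) -/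
open Set Topology

lemma zero_deriv_aux {s : Set ℝ} (hs : IsOpen s) {f : ℝ → ℝ}
    (h0 : ∀ x ∈ s, f x = 0) {z : ℝ} (hz : z ∈ s) {d : ℝ}
    (hf : HasDerivAt f d z) : d = 0 := by
  have he : f =ᶠ[𝓝 z] fun _ => (0 : ℝ) := by
    filter_upwards [hs.mem_nhds hz] with x hx using h0 x hx
  exact hf.unique ((hasDerivAt_const z (0 : ℝ)).congr_of_eventuallyEq he)

theorem stmt13 (a b : ℝ) (v : ℝ → ℝ)
    (hv : ContDiffOn ℝ 5 v (Set.Ioo a b))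
    (ca cb cc cd ce cg : ℝ)
    (hconic : ∀ y ∈ Set.Ioo a b,
      ca * (v y)^2 + cb * y * v y + cc * y^2 + cd * v y + ce * y + cg = 0)
    (hnd : ∀ y ∈ Set.Ioo a b, 2 * ca * v y + cb * y + cd ≠ 0) :
    ∀ y ∈ Set.Ioo a b,
      9 * (iteratedDeriv 2 v y)^2 * iteratedDeriv 5 v y
        - 45 * iteratedDeriv 2 v y * iteratedDeriv 3 v y * iteratedDeriv 4 v y
        + 40 * (iteratedDeriv 3 v y)^3 = 0 := by
  set s := Set.Ioo a b with hsdef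
  have hs : IsOpen s := isOpen_Ioo
  have c1 : ContDiffOn ℝ 4 (iteratedDeriv 1 v) s := by
    rw [iteratedDeriv_one]; exact hv.deriv_of_isOpen hs (by norm_num)
  have c2 : ContDiffOn ℝ 3 (iteratedDeriv 2 v) s := by
    have e : iteratedDeriv 2 v = deriv (iteratedDeriv 1 v) := by rw [iteratedDeriv_succ]
    rw [e]; exact c1.deriv_of_isOpen hs (by norm_num)
  have c3 : ContDiffOn ℝ 2 (iteratedDeriv 3 v) s := by
    have e : iteratedDeriv 3 v = deriv (iteratedDeriv 2 v) := by rw [iteratedDeriv_succ]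
    rw [e]; exact c2.deriv_of_isOpen hs (by norm_num)
  have c4 : ContDiffOn ℝ 1 (iteratedDeriv 4 v) s := by
    have e : iteratedDeriv 4 v = deriv (iteratedDeriv 3 v) := by rw [iteratedDeriv_succ]
    rw [e]; exact c3.deriv_of_isOpen hs (by norm_num)
  have d0 : ∀ z ∈ s, HasDerivAt v (iteratedDeriv 1 v z) z := by
    intro z hz
    have h := ((hv.differentiableOn (by norm_num)).differentiableAt
      (hs.mem_nhds hz)).hasDerivAt
    have e : iteratedDeriv 1 v z = deriv v z := by rw [iteratedDeriv_one]
    rw [e]; exact h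
  have d1 : ∀ z ∈ s, HasDerivAt (iteratedDeriv 1 v) (iteratedDeriv 2 v z) z := by
    intro z hz
    have h := ((c1.differentiableOn (by norm_num)).differentiableAt
      (hs.mem_nhds hz)).hasDerivAt
    have e : iteratedDeriv 2 v z = deriv (iteratedDeriv 1 v) z := by rw [iteratedDeriv_succ]
    rw [e]; exact h
  have d2 : ∀ z ∈ s, HasDerivAt (iteratedDeriv 2 v) (iteratedDeriv 3 v z) z := by
    intro z hz
    have h := ((c2.differentiableOn (by norm_num)).differentiableAt
      (hs.mem_nhds hz)).hasDerivAt
    have e : iteratedDeriv 3 v z = deriv (iteratedDeriv 2 v) z := by rw [iteratedDeriv_succ]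
    rw [e]; exact h
  have d3 : ∀ z ∈ s, HasDerivAt (iteratedDeriv 3 v) (iteratedDeriv 4 v z) z := by
    intro z hz
    have h := ((c3.differentiableOn (by norm_num)).differentiableAt
      (hs.mem_nhds hz)).hasDerivAt
    have e : iteratedDeriv 4 v z = deriv (iteratedDeriv 3 v) z := by rw [iteratedDeriv_succ]
    rw [e]; exact h
  have d4 : ∀ z ∈ s, HasDerivAt (iteratedDeriv 4 v) (iteratedDeriv 5 v z) z := by
    intro z hz
    have h := ((c4.differentiableOn (by norm_num)).differentiableAt
      (hs.mem_nhds hz)).hasDerivAt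
    have e : iteratedDeriv 5 v z = deriv (iteratedDeriv 4 v) z := by rw [iteratedDeriv_succ]
    rw [e]; exact h
  have E1 : ∀ z ∈ s, (2*ca*v z + cb*z + cd) * iteratedDeriv 1 v z
      + cb * v z + 2*cc*z + ce = 0 := by
    intro z hz
    have h0 := zero_deriv_aux hs hconic hz
      ((((((((d0 z hz).pow 2).const_mul ca).add
        (((hasDerivAt_id z).const_mul cb).mul (d0 z hz))).add
        ((hasDerivAt_pow 2 z).const_mul cc)).add
        ((d0 z hz).const_mul cd)).add
        ((hasDerivAt_id z).const_mul ce)).add_const cg)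
    simp only [id_eq] at h0
    push_cast at h0
    linear_combination h0
  have E2 : ∀ z ∈ s, (2*ca*v z + cb*z + cd) * iteratedDeriv 2 v z
      + 2*ca*(iteratedDeriv 1 v z)^2 + 2*cb*(iteratedDeriv 1 v z) + 2*cc = 0 := by
    intro z hz
    have hWd := (((d0 z hz).const_mul (2*ca)).add
      ((hasDerivAt_id z).const_mul cb)).add_const cd
    have h0 := zero_deriv_aux hs E1 hz
      ((((hWd.mul (d1 z hz)).add
        ((d0 z hz).const_mul cb)).add
        ((hasDerivAt_id z).const_mul (2*cc))).add_const ce)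
    simp only [id_eq, Pi.add_apply] at h0
    linear_combination h0
  have E3 : ∀ z ∈ s, (2*ca*v z + cb*z + cd) * iteratedDeriv 3 v z
      + 3*(2*ca*(iteratedDeriv 1 v z) + cb) * iteratedDeriv 2 v z = 0 := by
    intro z hz
    have hWd := (((d0 z hz).const_mul (2*ca)).add
      ((hasDerivAt_id z).const_mul cb)).add_const cd
    have h0 := zero_deriv_aux hs E2 hz
      ((((hWd.mul (d2 z hz)).add
        (((d1 z hz).pow 2).const_mul (2*ca))).add
        ((d1 z hz).const_mul (2*cb))).add_const (2*cc))
    simp only [id_eq, Pi.add_apply] at h0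
    push_cast at h0
    linear_combination h0
  have E4 : ∀ z ∈ s, (2*ca*v z + cb*z + cd) * iteratedDeriv 4 v z
      + 4*(2*ca*(iteratedDeriv 1 v z) + cb) * iteratedDeriv 3 v z
      + 6*ca*(iteratedDeriv 2 v z)^2 = 0 := by
    intro z hz
    have hWd := (((d0 z hz).const_mul (2*ca)).add
      ((hasDerivAt_id z).const_mul cb)).add_const cd
    have h0 := zero_deriv_aux hs E3 hz
      ((hWd.mul (d3 z hz)).add
        (((((d1 z hz).const_mul (2*ca)).add_const cb).const_mul 3).mul (d2 z hz)))
    simp only [id_eq, Pi.add_apply] at h0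
    linear_combination h0
  have E5 : ∀ z ∈ s, (2*ca*v z + cb*z + cd) * iteratedDeriv 5 v z
      + 5*(2*ca*(iteratedDeriv 1 v z) + cb) * iteratedDeriv 4 v z
      + 20*ca*(iteratedDeriv 2 v z)*(iteratedDeriv 3 v z) = 0 := by
    intro z hz
    have hWd := (((d0 z hz).const_mul (2*ca)).add
      ((hasDerivAt_id z).const_mul cb)).add_const cd
    have h0 := zero_deriv_aux hs E4 hz
      (((hWd.mul (d4 z hz)).add
        (((((d1 z hz).const_mul (2*ca)).add_const cb).const_mul 4).mul (d3 z hz))).add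
        (((d2 z hz).pow 2).const_mul (6*ca)))
    simp only [id_eq, Pi.add_apply] at h0
    push_cast at h0
    linear_combination h0
  intro y hy
  have e3 := E3 y hy
  have e4 := E4 y hy
  have e5 := E5 y hy
  set W := 2*ca*v y + cb*y + cd with hWdef
  set P := 2*ca*(iteratedDeriv 1 v y) + cb with hPdef
  set w2 := iteratedDeriv 2 v y
  set w3 := iteratedDeriv 3 v y
  set w4 := iteratedDeriv 4 v y
  set w5 := iteratedDeriv 5 v y
  have hWne : W ≠ 0 := hnd y hy
  have h3 : W * w3 = -(3*P*w2) := by linear_combination e3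
  have h4 : W^2 * w4 = 12*P^2*w2 - 6*ca*W*w2^2 := by
    linear_combination W * e4 - 4*P*h3
  have h5 : W^3 * w5 = -60*P^3*w2 + 90*ca*P*W*w2^2 := by
    linear_combination W^2 * e5 - 5*P*h4 - 20*ca*W*w2*h3
  have key : W^3 * (9*w2^2*w5 - 45*w2*w3*w4 + 40*w3^3) = 0 := by
    linear_combination 9*w2^2*h5 - 45*w2*w4*W^2*h3 + 135*P*w2^2*h4
      + 40*(W^2*w3^2 - 3*P*w2*W*w3 + 9*P^2*w2^2)*h3
  have hfin := (mul_eq_zero.mp key).resolve_left (pow_ne_zero _ hWne)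
  linarith [hfin]
end

section
/- Let u_xx, u_xy, u_yy be real numbers with u_xx·u_yy − u_xy² < 0 and u_yy ≠ 0, and set r := √(u_xy² − u_xx·u_yy) and b := u_xy − r. Then the set of vectors (y¹, y², p₁₁, p₁₂, p₂₂) ∈ ℝ⁵ satisfying the two linear equations y¹·u_xy·r + y²·u_yy·r + y¹·(u_xx·u_yy − u_xy²) = 0 and 2·p₁₂·u_yy·r − 2·r·p₂₂·u_xy + p₁₁·u_yy² − 2·p₁₂·u_xy·u_yy − p₂₂·u_xx·u_yy + 2·p₂₂·u_xy² = 0 is exactly the three-dimensional linear span of the vectors (−u_yy, b, 0, 0, 0), (0, 0, 2b, u_yy, 0), and (0, 0, −b², 0, u_yy²). -/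
theorem stmt15 (uxx uxy uyy : ℝ)
    (hD : uxx*uyy - uxy^2 < 0) (hyy : uyy ≠ 0) :
    let r := Real.sqrt (uxy^2 - uxx*uyy)
    let b := uxy - r
    {v : Fin 5 → ℝ |
        v 0 * uxy * r + v 1 * uyy * r + v 0 * (uxx*uyy - uxy^2) = 0 ∧
        2 * v 3 * uyy * r - 2 * r * v 4 * uxy + v 2 * uyy^2
          - 2 * v 3 * uxy * uyy - v 4 * uxx * uyy + 2 * v 4 * uxy^2 = 0}
      = (Submodule.span ℝ
          ({![-uyy, b, 0, 0, 0], ![0, 0, 2*b, uyy, 0], ![0, 0, -b^2, 0, uyy^2]} :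
            Set (Fin 5 → ℝ)) : Set (Fin 5 → ℝ))
    ∧ Module.finrank ℝ (Submodule.span ℝ
        ({![-uyy, b, 0, 0, 0], ![0, 0, 2*b, uyy, 0], ![0, 0, -b^2, 0, uyy^2]} :
          Set (Fin 5 → ℝ))) = 3 := by
  intro r b
  have hpos : 0 < uxy^2 - uxx*uyy := by linarith
  have hr2 : r^2 = uxy^2 - uxx*uyy := Real.sq_sqrt hpos.le
  have hr : 0 < r := Real.sqrt_pos.mpr hpos
  have hb : b = uxy - r := rfl
  have hset : ({![-uyy, b, 0, 0, 0], ![0, 0, 2*b, uyy, 0], ![0, 0, -b^2, 0, uyy^2]} :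
      Set (Fin 5 → ℝ)) = Set.range ![![-uyy, b, 0, 0, 0], ![0, 0, 2*b, uyy, 0], ![0, 0, -b^2, 0, uyy^2]] := by
    ext x
    simp [Fin.exists_fin_succ, eq_comm]
    tauto
  have hli : LinearIndependent ℝ ![![-uyy, b, 0, 0, 0], ![0, 0, 2*b, uyy, 0], ![0, 0, -b^2, 0, uyy^2]] := by
    rw [Fintype.linearIndependent_iff]
    intro g hg
    have h0 : (∑ i, g i • ![![-uyy, b, 0, 0, 0], ![0, 0, 2*b, uyy, 0], ![0, 0, -b^2, 0, uyy^2]] i) 0 = 0 := by rw [hg]; rfl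
    have h3 : (∑ i, g i • ![![-uyy, b, 0, 0, 0], ![0, 0, 2*b, uyy, 0], ![0, 0, -b^2, 0, uyy^2]] i) 3 = 0 := by rw [hg]; rfl
    have h4 : (∑ i, g i • ![![-uyy, b, 0, 0, 0], ![0, 0, 2*b, uyy, 0], ![0, 0, -b^2, 0, uyy^2]] i) 4 = 0 := by rw [hg]; rfl
    rw [Fin.sum_univ_three] at h0 h3 h4
    simp at h0 h3 h4
    have hg0 : g 0 = 0 := by rcases h0 with h | h; exact h; exact absurd h hyy
    have hg1 : g 1 = 0 := by rcases h3 with h | h; exact h; exact absurd h hyy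
    have hg2 : g 2 = 0 := by rcases h4 with h | h; exact h; exact absurd h hyy
    intro i; fin_cases i <;> assumption
  constructor
  · ext v
    simp only [Set.mem_setOf_eq, SetLike.mem_coe]
    constructor
    · rintro ⟨h1, h2⟩
      have h1' : v 0 * (uxy - r) + v 1 * uyy = 0 := by
        have hrr : r * (v 0 * (uxy - r) + v 1 * uyy) = 0 := by
          linear_combination h1 - v 0 * hr2
        exact (mul_eq_zero.mp hrr).resolve_left hr.ne'
      have h2' : v 2 * uyy^2 - 2*(uxy - r)*uyy * v 3 + (uxy - r)^2 * v 4 = 0 := by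
        linear_combination h2 + v 4 * hr2
      have hv : v = (-(v 0)/uyy) • ![-uyy, b, 0, 0, 0] + (v 3/uyy) • ![0, 0, 2*b, uyy, 0]
          + (v 4/uyy^2) • ![0, 0, -b^2, 0, uyy^2] := by
        funext i
        have e0 : v 0 = (-(v 0)/uyy) * (-uyy) + (v 3/uyy) * 0 + (v 4/uyy^2) * 0 := by
          field_simp
          ring
        have e1 : v 1 = (-(v 0)/uyy) * (uxy - r) + (v 3/uyy) * 0 + (v 4/uyy^2) * 0 := by
          field_simp
          linear_combination uyy * h1'
        have e2 : v 2 = (-(v 0)/uyy) * 0 + (v 3/uyy) * (2*(uxy - r)) + (v 4/uyy^2) * (-(uxy - r)^2) := by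
          field_simp
          linear_combination h2'
        have e3 : v 3 = (-(v 0)/uyy) * 0 + (v 3/uyy) * uyy + (v 4/uyy^2) * 0 := by
          field_simp
          ring
        have e4 : v 4 = (-(v 0)/uyy) * 0 + (v 3/uyy) * 0 + (v 4/uyy^2) * uyy^2 := by
          field_simp
          ring
        fin_cases i <;> simp [hb] <;>
          first
            | linear_combination e0
            | linear_combination e1
            | linear_combination e2
            | linear_combination e3
            | linear_combination e4
      rw [hv]
      refine add_mem (add_mem (Submodule.smul_mem _ _ ?_) (Submodule.smul_mem _ _ ?_))
        (Submodule.smul_mem _ _ ?_) <;>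
        exact Submodule.subset_span (by simp)
    · intro hv
      induction hv using Submodule.span_induction with
      | mem x hx =>
        rcases hx with h | h | h <;> subst h <;> constructor <;> simp [hb]
        · linear_combination (-uyy) * hr2
        · ring
        · linear_combination (-uyy^2) * hr2
      | zero => constructor <;> simp
      | add x y hx hy px py =>
        obtain ⟨px1, px2⟩ := px; obtain ⟨py1, py2⟩ := py
        constructor <;> simp only [Pi.add_apply] <;>
          [linear_combination px1 + py1; linear_combination px2 + py2]
      | smul a x hx px =>
        obtain ⟨px1, px2⟩ := px
        constructor <;> simp only [Pi.smul_apply, smul_eq_mul] <;>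
          [linear_combination a * px1; linear_combination a * px2]
  · rw [hset, finrank_span_eq_card hli]
    simp
end

section
/- Let (u_ij), i,j ∈ {1,2}, be a symmetric family of reals with D := u₁₁·u₂₂ − u₁₂² ≠ 0, and let (u_ijk) be a totally symmetric family of reals. Define ρ := |D|^(−1/4); for k ∈ {1,2} define D_k := u_{11k}·u₂₂ + u₁₁·u_{22k} − 2·u₁₂·u_{12k} and ρ_k := −(1/4)·|D|^(−1/4)·D_k/D; define the Fubini–Pick coefficients C_ijk := ρ·u_ijk + u_ij·ρ_k + u_jk·ρ_i + u_ik·ρ_j; and let (h^{ij}) be the inverse matrix of the Blaschke metric (ρ·u_ij), i.e. h^{11} = u₂₂/(ρ·D), h^{12} = h^{21} = −u₁₂/(ρ·D), h^{22} = u₁₁/(ρ·D). Then for all η₁, η₂ ∈ ℝ: 8·|D|^(5/2) · Σ_{a,b,c,i,j,k ∈ {1,2}} h^{ai}·h^{bj}·h^{ck}·C_{abc}·η_i·η_j·η_k = sgn(D)·[(∂F/∂u_xxx)·η₁³ + (∂F/∂u_xxy)·η₁²η₂ + (∂F/∂u_xyy)·η₁η₂² + (∂F/∂u_yyy)·η₂³],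 where on the right-hand side F is evaluated at u_xx = u₁₁, u_xy = u₁₂, u_yy = u₂₂, u_xxx = u₁₁₁, u_xxy = u₁₁₂, u_xyy = u₁₂₂, u_yyy = u₂₂₂ and ∂F/∂u_ijk denotes the formal partial derivative of the polynomial F with respect to the third-order variable u_ijk. -/
noncomputable section

lemma deriv_quad (a b c x : ℝ) : deriv (fun s => a*s^2 + b*s + c) x = 2*a*x + b := by
  have h1 : HasDerivAt (fun s : ℝ => a*s^2) (2*a*x) x := by
    have := (hasDerivAt_pow 2 x).const_mul a
    simpa [mul_comm, mul_assoc, mul_left_comm] using this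
  have h2 : HasDerivAt (fun s : ℝ => b*s) b x := by
    simpa using (hasDerivAt_id x).const_mul b
  have h : HasDerivAt (fun s : ℝ => a*s^2 + b*s + c) (2*a*x + b) x := by
    simpa using (h1.add h2).add_const c
  exact h.deriv

lemma dF1 (a b c d e f x : ℝ) : deriv (fun s => Fpoly a b c s d e f) x
    = 2*c^3*x + (6*a*b*c*f - 6*a*e*c^2 - 6*d*b*c^2 + 12*b^2*e*c - 8*b^3*f) := by
  have h : (fun s => Fpoly a b c s d e f)
      = fun s => c^3*s^2 + (6*a*b*c*f - 6*a*e*c^2 - 6*d*b*c^2 + 12*b^2*e*c - 8*b^3*f)*s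
          + (-18*a*d*b*e*c + 12*a*d*b^2*f - 6*a^2*d*c*f + 9*a*d^2*c^2 - 6*a^2*b*e*f
             + 9*a^2*e^2*c + a^3*f^2) := by
    funext s; simp only [Fpoly]; ring
  rw [h, deriv_quad]

lemma dF2 (a b c d e f x : ℝ) : deriv (fun s => Fpoly a b c d s e f) x
    = 2*(9*a*c^2)*x + (-18*a*b*e*c + 12*a*b^2*f - 6*a^2*c*f - 6*d*b*c^2) := by
  have h : (fun s => Fpoly a b c d s e f)
      = fun s => (9*a*c^2)*s^2 + (-18*a*b*e*c + 12*a*b^2*f - 6*a^2*c*f - 6*d*b*c^2)*s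
          + (6*a*d*b*c*f - 6*a*d*e*c^2 - 6*a^2*b*e*f + 9*a^2*e^2*c + a^3*f^2
             + 12*d*b^2*e*c - 8*d*b^3*f + d^2*c^3) := by
    funext s; simp only [Fpoly]; ring
  rw [h, deriv_quad]

lemma dF3 (a b c d e f x : ℝ) : deriv (fun s => Fpoly a b c d e s f) x
    = 2*(9*a^2*c)*x + (-6*a*d*c^2 - 18*a*e*b*c - 6*a^2*b*f + 12*d*b^2*c) := by
  have h : (fun s => Fpoly a b c d e s f)
      = fun s => (9*a^2*c)*s^2 + (-6*a*d*c^2 - 18*a*e*b*c - 6*a^2*b*f + 12*d*b^2*c)*s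
          + (6*a*d*b*c*f + 12*a*e*b^2*f - 6*a^2*e*c*f + 9*a*e^2*c^2 + a^3*f^2
             - 6*d*e*b*c^2 - 8*d*b^3*f + d^2*c^3) := by
    funext s; simp only [Fpoly]; ring
  rw [h, deriv_quad]

lemma dF4 (a b c d e f x : ℝ) : deriv (fun s => Fpoly a b c d e f s) x
    = 2*a^3*x + (6*a*d*b*c + 12*a*e*b^2 - 6*a^2*e*c - 6*a^2*b*f - 8*d*b^3) := by
  have h : (fun s => Fpoly a b c d e f s)
      = fun s => a^3*s^2 + (6*a*d*b*c + 12*a*e*b^2 - 6*a^2*e*c - 6*a^2*b*f - 8*d*b^3)*s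
          + (-6*a*d*f*c^2 - 18*a*e*b*f*c + 9*a*e^2*c^2 + 9*a^2*f^2*c
             - 6*d*e*b*c^2 + 12*d*b^2*f*c + d^2*c^3) := by
    funext s; simp only [Fpoly]; ring
  rw [h, deriv_quad]

lemma term_eq {ρ Dv : ℝ} (hρ : ρ ≠ 0) (hD : Dv ≠ 0)
    (X Y Z w a1 a2 a3 K1 K2 K3 E1 E2 E3 : ℝ) :
    X/(ρ*Dv) * (Y/(ρ*Dv)) * (Z/(ρ*Dv)) *
      (ρ*w + a1 * (-(1/4*ρ*K1)/Dv) + a2 * (-(1/4*ρ*K2)/Dv) + a3 * (-(1/4*ρ*K3)/Dv))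
      * E1 * E2 * E3
    = (X*Y*Z*(Dv*w - 1/4*(a1*K1+a2*K2+a3*K3))*E1*E2*E3) / (ρ^2*Dv^4) := by
  field_simp
  ring

set_option maxHeartbeats 4000000 in
theorem stmt18 (u2 : Fin 2 → Fin 2 → ℝ) (u3 : Fin 2 → Fin 2 → Fin 2 → ℝ)
    (hsym2 : ∀ i j, u2 i j = u2 j i)
    (hsym3 : ∀ i j k, u3 i j k = u3 j i k ∧ u3 i j k = u3 i k j)
    (hD : u2 0 0 * u2 1 1 - (u2 0 1)^2 ≠ 0) :
    let D := u2 0 0 * u2 1 1 - (u2 0 1)^2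
    let ρ := |D| ^ (-(1/4 : ℝ))
    let Dk : Fin 2 → ℝ := fun k =>
      u3 0 0 k * u2 1 1 + u2 0 0 * u3 1 1 k - 2 * u2 0 1 * u3 0 1 k
    let ρk : Fin 2 → ℝ := fun k => -(1/4 : ℝ) * |D| ^ (-(1/4 : ℝ)) * Dk k / D
    let C : Fin 2 → Fin 2 → Fin 2 → ℝ := fun i j k =>
      ρ * u3 i j k + u2 i j * ρk k + u2 j k * ρk i + u2 i k * ρk j
    let hinv : Fin 2 → Fin 2 → ℝ := fun i j =>
      if i = 0 ∧ j = 0 then u2 1 1 / (ρ * D)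
      else if i = 1 ∧ j = 1 then u2 0 0 / (ρ * D)
      else -(u2 0 1) / (ρ * D)
    ∀ η : Fin 2 → ℝ,
      8 * |D| ^ ((5:ℝ)/2) *
        (∑ a : Fin 2, ∑ b : Fin 2, ∑ c : Fin 2, ∑ i : Fin 2, ∑ j : Fin 2, ∑ k : Fin 2,
          hinv a i * hinv b j * hinv c k * C a b c * η i * η j * η k)
      = Real.sign D *
          ((deriv (fun s => Fpoly (u2 0 0) (u2 0 1) (u2 1 1)
              s (u3 0 0 1) (u3 0 1 1) (u3 1 1 1)) (u3 0 0 0)) * (η 0)^3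
          + (deriv (fun s => Fpoly (u2 0 0) (u2 0 1) (u2 1 1)
              (u3 0 0 0) s (u3 0 1 1) (u3 1 1 1)) (u3 0 0 1)) * (η 0)^2 * η 1
          + (deriv (fun s => Fpoly (u2 0 0) (u2 0 1) (u2 1 1)
              (u3 0 0 0) (u3 0 0 1) s (u3 1 1 1)) (u3 0 1 1)) * η 0 * (η 1)^2
          + (deriv (fun s => Fpoly (u2 0 0) (u2 0 1) (u2 1 1)
              (u3 0 0 0) (u3 0 0 1) (u3 0 1 1) s) (u3 1 1 1)) * (η 1)^3) := by
  intro D ρ Dk ρk C hinv η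
  have hDne : D ≠ 0 := hD
  have hA : (0:ℝ) < |D| := abs_pos.mpr hDne
  have hr0 : |D| ^ (-(1/4 : ℝ)) ≠ 0 := ne_of_gt (Real.rpow_pos_of_pos hA _)
  have e2 : u2 1 0 = u2 0 1 := hsym2 1 0
  have e010 : u3 0 1 0 = u3 0 0 1 := (hsym3 0 0 1).2.symm
  have e100 : u3 1 0 0 = u3 0 0 1 := by rw [(hsym3 1 0 0).1, e010]
  have e101 : u3 1 0 1 = u3 0 1 1 := (hsym3 1 0 1).1
  have e110 : u3 1 1 0 = u3 0 1 1 := by rw [(hsym3 1 1 0).2, e101]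
  have h3 : |D| ^ ((5:ℝ)/2) = |D|^3 * (|D| ^ (-(1/4:ℝ)))^2 := by
    rw [← Real.rpow_natCast (|D| ^ (-(1/4:ℝ))) 2, ← Real.rpow_natCast |D| 3,
        ← Real.rpow_mul hA.le, ← Real.rpow_add hA]
    norm_num
  rw [dF1, dF2, dF3, dF4]
  simp only [Fin.sum_univ_two, hinv, C, ρk, Dk]
  norm_num
  rw [e010, e100, e101, e110, e2]
  rw [show |D| ^ (-(1/4:ℝ)) = ρ from rfl]
  have h3' : |D| ^ ((5:ℝ)/2) = |D|^3 * ρ^2 := h3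
  have habs3 : |D|^3 = Real.sign D * D^3 := by
    rcases hDne.lt_or_gt with h | h
    · rw [abs_of_neg h, Real.sign_of_neg h]; ring
    · rw [abs_of_pos h, Real.sign_of_pos h]; ring
  have hρ : ρ ≠ 0 := hr0
  rw [h3', habs3]
  simp only [term_eq hρ hDne, ← add_div]
  rw [show D = u2 0 0 * u2 1 1 - u2 0 1^2 from rfl]
  field_simp
  ring

end
end

section
/- Let (u_ij), i,j ∈ {1,2}, be a symmetric family of reals with D := u₁₁·u₂₂ − u₁₂² ≠ 0, and let (u_ijk) be a totally symmetric family of reals. Define ρ := |D|^(−1/4); for k ∈ {1,2} define D_k := u_{11k}·u₂₂ + u₁₁·u_{22k} − 2·u₁₂·u_{12k} and ρ_k := −(1/4)·|D|^(−1/4)·D_k/D; define C_ijk := ρ·u_ijk + u_ij·ρ_k + u_jk·ρ_i + u_ik·ρ_j; and let (h^{ij}) be the inverse matrix of (ρ·u_ij). Then the Fubini–Pick invariant Σ_{i₁,i₂,j₁,j₂,k₁,k₂ ∈ {1,2}} h^{i₁i₂}·h^{j₁j₂}·h^{k₁k₂}·C_{i₁j₁k₁}·C_{i₂j₂k₂}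 vanishes if and only if F = 0, where F is evaluated at u_xx = u₁₁, u_xy = u₁₂, u_yy = u₂₂, u_xxx = u₁₁₁, u_xxy = u₁₁₂, u_xyy = u₁₂₂, u_yyy = u₂₂₂. (The Fubini–Pick invariant equals F up to a nowhere zero factor.) -/
noncomputable section

set_option maxHeartbeats 4000000 in
theorem stmt19 (u2 : Fin 2 → Fin 2 → ℝ) (u3 : Fin 2 → Fin 2 → Fin 2 → ℝ)
    (hsym2 : ∀ i j, u2 i j = u2 j i)
    (hsym3 : ∀ i j k, u3 i j k = u3 j i k ∧ u3 i j k = u3 i k j)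
    (hD : u2 0 0 * u2 1 1 - (u2 0 1)^2 ≠ 0) :
    let D := u2 0 0 * u2 1 1 - (u2 0 1)^2
    let ρ := |D| ^ (-(1/4 : ℝ))
    let Dk : Fin 2 → ℝ := fun k =>
      u3 0 0 k * u2 1 1 + u2 0 0 * u3 1 1 k - 2 * u2 0 1 * u3 0 1 k
    let ρk : Fin 2 → ℝ := fun k => -(1/4 : ℝ) * |D| ^ (-(1/4 : ℝ)) * Dk k / D
    let C : Fin 2 → Fin 2 → Fin 2 → ℝ := fun i j k =>
      ρ * u3 i j k + u2 i j * ρk k + u2 j k * ρk i + u2 i k * ρk j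
    let hinv : Fin 2 → Fin 2 → ℝ := fun i j =>
      if i = 0 ∧ j = 0 then u2 1 1 / (ρ * D)
      else if i = 1 ∧ j = 1 then u2 0 0 / (ρ * D)
      else -(u2 0 1) / (ρ * D)
    ((∑ i₁ : Fin 2, ∑ i₂ : Fin 2, ∑ j₁ : Fin 2, ∑ j₂ : Fin 2, ∑ k₁ : Fin 2, ∑ k₂ : Fin 2,
        hinv i₁ i₂ * hinv j₁ j₂ * hinv k₁ k₂ * C i₁ j₁ k₁ * C i₂ j₂ k₂) = 0
      ↔ Fpoly (u2 0 0) (u2 0 1) (u2 1 1)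
          (u3 0 0 0) (u3 0 0 1) (u3 0 1 1) (u3 1 1 1) = 0) := by
  intro D ρ Dk ρk C hinv
  have hDpos : (0:ℝ) < |D| := abs_pos.mpr hD
  have hρ : (0:ℝ) < ρ := Real.rpow_pos_of_pos hDpos _
  have hρ' : ρ ≠ 0 := ne_of_gt hρ
  have hD' : D ≠ 0 := hD
  have h010 : u3 0 1 0 = u3 0 0 1 := (hsym3 0 1 0).2
  have h100 : u3 1 0 0 = u3 0 0 1 := (hsym3 1 0 0).1.trans h010
  have h101 : u3 1 0 1 = u3 0 1 1 := (hsym3 1 0 1).1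
  have h110 : u3 1 1 0 = u3 0 1 1 := (hsym3 1 1 0).2.trans h101
  have h21 : u2 1 0 = u2 0 1 := hsym2 1 0
  have h00 : hinv 0 0 = u2 1 1 / (ρ * D) := by unfold hinv; norm_num
  have h01 : hinv 0 1 = -(u2 0 1) / (ρ * D) := by unfold hinv; norm_num
  have h10 : hinv 1 0 = -(u2 0 1) / (ρ * D) := by unfold hinv; norm_num
  have h11 : hinv 1 1 = u2 0 0 / (ρ * D) := by unfold hinv; norm_num
  have hC000 : C 0 0 0 = ρ * (4*D*(u3 0 0 0) - (u2 0 0 * (u3 0 0 0 * u2 1 1 + u2 0 0 * u3 0 1 1 - 2 * u2 0 1 * u3 0 0 1) + u2 0 0 * (u3 0 0 0 * u2 1 1 + u2 0 0 * u3 0 1 1 - 2 * u2 0 1 * u3 0 0 1) + u2 0 0 * (u3 0 0 0 * u2 1 1 + u2 0 0 * u3 0 1 1 - 2 * u2 0 1 * u3 0 0 1))) / (4*D) := by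
    unfold C ρk Dk ρ
    beta_reduce
    try simp only [h010, h100, h101, h110, h21]
    unfold D
    field_simp
    ring
  have hC001 : C 0 0 1 = ρ * (4*D*(u3 0 0 1) - (u2 0 0 * (u3 0 0 1 * u2 1 1 + u2 0 0 * u3 1 1 1 - 2 * u2 0 1 * u3 0 1 1) + u2 0 1 * (u3 0 0 0 * u2 1 1 + u2 0 0 * u3 0 1 1 - 2 * u2 0 1 * u3 0 0 1) + u2 0 1 * (u3 0 0 0 * u2 1 1 + u2 0 0 * u3 0 1 1 - 2 * u2 0 1 * u3 0 0 1))) / (4*D) := by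
    unfold C ρk Dk ρ
    beta_reduce
    try simp only [h010, h100, h101, h110, h21]
    unfold D
    field_simp
    ring
  have hC010 : C 0 1 0 = ρ * (4*D*(u3 0 0 1) - (u2 0 1 * (u3 0 0 0 * u2 1 1 + u2 0 0 * u3 0 1 1 - 2 * u2 0 1 * u3 0 0 1) + u2 0 1 * (u3 0 0 0 * u2 1 1 + u2 0 0 * u3 0 1 1 - 2 * u2 0 1 * u3 0 0 1) + u2 0 0 * (u3 0 0 1 * u2 1 1 + u2 0 0 * u3 1 1 1 - 2 * u2 0 1 * u3 0 1 1))) / (4*D) := by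
    unfold C ρk Dk ρ
    beta_reduce
    try simp only [h010, h100, h101, h110, h21]
    unfold D
    field_simp
    ring
  have hC011 : C 0 1 1 = ρ * (4*D*(u3 0 1 1) - (u2 0 1 * (u3 0 0 1 * u2 1 1 + u2 0 0 * u3 1 1 1 - 2 * u2 0 1 * u3 0 1 1) + u2 1 1 * (u3 0 0 0 * u2 1 1 + u2 0 0 * u3 0 1 1 - 2 * u2 0 1 * u3 0 0 1) + u2 0 1 * (u3 0 0 1 * u2 1 1 + u2 0 0 * u3 1 1 1 - 2 * u2 0 1 * u3 0 1 1))) / (4*D) := by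
    unfold C ρk Dk ρ
    beta_reduce
    try simp only [h010, h100, h101, h110, h21]
    unfold D
    field_simp
    ring
  have hC100 : C 1 0 0 = ρ * (4*D*(u3 0 0 1) - (u2 0 1 * (u3 0 0 0 * u2 1 1 + u2 0 0 * u3 0 1 1 - 2 * u2 0 1 * u3 0 0 1) + u2 0 0 * (u3 0 0 1 * u2 1 1 + u2 0 0 * u3 1 1 1 - 2 * u2 0 1 * u3 0 1 1) + u2 0 1 * (u3 0 0 0 * u2 1 1 + u2 0 0 * u3 0 1 1 - 2 * u2 0 1 * u3 0 0 1))) / (4*D) := by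
    unfold C ρk Dk ρ
    beta_reduce
    try simp only [h010, h100, h101, h110, h21]
    unfold D
    field_simp
    ring
  have hC101 : C 1 0 1 = ρ * (4*D*(u3 0 1 1) - (u2 0 1 * (u3 0 0 1 * u2 1 1 + u2 0 0 * u3 1 1 1 - 2 * u2 0 1 * u3 0 1 1) + u2 0 1 * (u3 0 0 1 * u2 1 1 + u2 0 0 * u3 1 1 1 - 2 * u2 0 1 * u3 0 1 1) + u2 1 1 * (u3 0 0 0 * u2 1 1 + u2 0 0 * u3 0 1 1 - 2 * u2 0 1 * u3 0 0 1))) / (4*D) := by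
    unfold C ρk Dk ρ
    beta_reduce
    try simp only [h010, h100, h101, h110, h21]
    unfold D
    field_simp
    ring
  have hC110 : C 1 1 0 = ρ * (4*D*(u3 0 1 1) - (u2 1 1 * (u3 0 0 0 * u2 1 1 + u2 0 0 * u3 0 1 1 - 2 * u2 0 1 * u3 0 0 1) + u2 0 1 * (u3 0 0 1 * u2 1 1 + u2 0 0 * u3 1 1 1 - 2 * u2 0 1 * u3 0 1 1) + u2 0 1 * (u3 0 0 1 * u2 1 1 + u2 0 0 * u3 1 1 1 - 2 * u2 0 1 * u3 0 1 1))) / (4*D) := by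
    unfold C ρk Dk ρ
    beta_reduce
    try simp only [h010, h100, h101, h110, h21]
    unfold D
    field_simp
    ring
  have hC111 : C 1 1 1 = ρ * (4*D*(u3 1 1 1) - (u2 1 1 * (u3 0 0 1 * u2 1 1 + u2 0 0 * u3 1 1 1 - 2 * u2 0 1 * u3 0 1 1) + u2 1 1 * (u3 0 0 1 * u2 1 1 + u2 0 0 * u3 1 1 1 - 2 * u2 0 1 * u3 0 1 1) + u2 1 1 * (u3 0 0 1 * u2 1 1 + u2 0 0 * u3 1 1 1 - 2 * u2 0 1 * u3 0 1 1))) / (4*D) := by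
    unfold C ρk Dk ρ
    beta_reduce
    try simp only [h010, h100, h101, h110, h21]
    unfold D
    field_simp
    ring
  have hden : ρ * D * (ρ * D) * (ρ * D) * (4 * D) * (4 * D) ≠ 0 := by
    positivity
  have hden2 : 4 * ρ * D ^ 3 ≠ 0 := by positivity
  have key : (∑ i₁ : Fin 2, ∑ i₂ : Fin 2, ∑ j₁ : Fin 2, ∑ j₂ : Fin 2, ∑ k₁ : Fin 2, ∑ k₂ : Fin 2,
        hinv i₁ i₂ * hinv j₁ j₂ * hinv k₁ k₂ * C i₁ j₁ k₁ * C i₂ j₂ k₂)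
      = Fpoly (u2 0 0) (u2 0 1) (u2 1 1)
          (u3 0 0 0) (u3 0 0 1) (u3 0 1 1) (u3 1 1 1) / (4 * ρ * D ^ 3) := by
    simp only [Fin.sum_univ_two]
    simp only [h00, h01, h10, h11, hC000, hC001, hC010, hC011, hC100, hC101, hC110, hC111]
    simp only [div_mul_div_comm, ← add_div]
    rw [div_eq_div_iff hden hden2]
    unfold D
    rw [Fpoly]
    ring
  rw [key, div_eq_zero_iff]
  simp [hden2]


end
end
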